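/- arXiv:2512.14473 — 6 statements merged into one kernel-verified Lean document; each statement's English description precedes it below -/
import Mathlib

section
/- Let Σ ∈ ℝ^{p×p} be symmetric positive semidefinite, t ≥ 0, and β ∈ ℝ^p. Then ‖Σ^{1/2}·exp(−tΣ)·β‖₂ ≤ ‖Σ^{1/2}·(I_p + tΣ)⁻¹·β‖₂, where exp(−tΣ) is the matrix exponential and (I_p + tΣ)⁻¹ exists since I_p + tΣ is positive definite. Consequently, for any linear regression problem (Σ, β*, σ_ξ), any t ≥ 1 and any b > 0, the rate of gradient flow is at most the rate of ridge regression: r^{GF}(V_{J*},V_{J*ᶜ}) ≤ r^{Ridge}(V_{J*},V_{J*ᶜ}), where r^{GF} is the rate with residual function ψ_t^{GF}(x) = exp(−tx) and r^{Ridge} is the rate with residual function ψ_t^{Ridge}(x) = 1/(xt + 1). -/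
open Matrix

namespace SpecFSD4

noncomputable def l2norm {n : ℕ} (v : Fin n → ℝ) : ℝ := Real.sqrt (∑ i, v i ^ 2)

def ONFamily {p : ℕ} (e : Fin p → Fin p → ℝ) : Prop :=
  (∀ j, ∑ i, e j i * e j i = 1) ∧ ∀ j k, j ≠ k → ∑ i, e j i * e k i = 0

noncomputable def specMat {p : ℕ} (e : Fin p → Fin p → ℝ) (c : Fin p → ℝ) :
    Matrix (Fin p) (Fin p) ℝ :=
  ∑ j, c j • Matrix.vecMulVec (e j) (e j)

/-- Estimation dimension: `k* = min{k ∈ {1,…,p} : σ_{k+1} ≤ thr}` (with `σ_{p+1} := 0`,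
eigenvalues 1-indexed, `σv` 0-indexed). -/
def IsEstimationDim (p : ℕ) (σv : Fin p → ℝ) (thr : ℝ) (k : ℕ) : Prop :=
  IsLeast {k : ℕ | 1 ≤ k ∧ k ≤ p ∧ ∀ h : k < p, σv ⟨k, h⟩ ≤ thr} k

/-- The rate `r^ψ(V_{J*},V_{J*ᶜ})` associated with a residual function `ψ`:
`‖Σ_{J*}^{1/2}ψ(Σ)β*_{J*}‖₂ + σ_ξ√(k*/N) + ‖Σ_{J*ᶜ}^{1/2}β*_{J*ᶜ}‖₂
  + σ_ξ t √(Tr(Σ_{J*ᶜ}²)/N)`. -/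
noncomputable def rate {p : ℕ} (N : ℕ) (e : Fin p → Fin p → ℝ) (σv : Fin p → ℝ)
    (ψ : ℝ → ℝ) (k : ℕ) (β : Fin p → ℝ) (σξ t : ℝ) : ℝ :=
  l2norm ((specMat e fun j => if (j : ℕ) < k then Real.sqrt (σv j) else 0).mulVec
      ((specMat e fun j => ψ (σv j)).mulVec
        ((specMat e fun j => if (j : ℕ) < k then 1 else 0).mulVec β)))
    + σξ * Real.sqrt ((k : ℝ) / N)
    + l2norm ((specMat e fun j => if (j : ℕ) < k then 0 else Real.sqrt (σv j)).mulVec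
        ((specMat e fun j => if (j : ℕ) < k then 0 else 1).mulVec β))
    + σξ * t * Real.sqrt (Matrix.trace
        ((specMat e fun j => if (j : ℕ) < k then 0 else σv j) *
          (specMat e fun j => if (j : ℕ) < k then 0 else σv j)) / N)

/-!
An orthonormal family diagonalises all `specMat e c` at once: `specMat e c = Eᵀ (diagonal c) E`
with `E = of e` orthogonal. Hence products, `1 + t • _` and inverses act on the coefficient
vector `c`, and `l2norm (specMat e c *ᵥ w)` is the Euclidean norm of `c * (E *ᵥ w)`. Both
inequalities thus compare norms of the same coordinates weighted by `exp (-t σⱼ)` and by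
`(1 + t σⱼ)⁻¹`, and `exp (-x) ≤ (1 + x)⁻¹` since `1 + x ≤ exp x`. In the rates only the first
summand depends on the residual function.
-/

variable {p : ℕ} {e : Fin p → Fin p → ℝ}

lemma l2norm_eq_sqrt_dotProduct (v : Fin p → ℝ) : l2norm v = Real.sqrt (v ⬝ᵥ v) := by
  simp only [l2norm, dotProduct, sq]

lemma l2norm_le_l2norm_of_abs_le {u v : Fin p → ℝ} (huv : ∀ i, |u i| ≤ |v i|) :
    l2norm u ≤ l2norm v :=
  Real.sqrt_le_sqrt <| Finset.sum_le_sum fun i _ => sq_le_sq.mpr (huv i)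

lemma ONFamily.mul_transpose_eq_one (h : ONFamily e) : of e * (of e)ᵀ = 1 := by
  ext j k
  by_cases hjk : j = k
  · subst hjk; simp [mul_apply, h.1 j]
  · simp [mul_apply, h.2 j k hjk, hjk]

lemma ONFamily.transpose_mul_eq_one (h : ONFamily e) : (of e)ᵀ * of e = 1 :=
  mul_eq_one_comm.mp h.mul_transpose_eq_one

lemma specMat_eq_transpose_mul_diagonal_mul (c : Fin p → ℝ) :
    specMat e c = (of e)ᵀ * diagonal c * of e := by
  ext i i'
  simp only [specMat, Matrix.sum_apply, Matrix.smul_apply, vecMulVec_apply, mul_apply,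
    diagonal_apply, transpose_apply, of_apply, smul_eq_mul, mul_ite, mul_zero, Finset.sum_ite_eq',
    Finset.mem_univ, if_true]
  exact Finset.sum_congr rfl fun j _ => by ring

lemma specMat_mul (h : ONFamily e) (c d : Fin p → ℝ) :
    specMat e c * specMat e d = specMat e (c * d) := by
  simp only [specMat_eq_transpose_mul_diagonal_mul]
  calc (of e)ᵀ * diagonal c * of e * ((of e)ᵀ * diagonal d * of e)
      = (of e)ᵀ * diagonal c * (of e * (of e)ᵀ) * diagonal d * of e := by
        simp only [Matrix.mul_assoc]
    _ = (of e)ᵀ * (diagonal c * diagonal d) * of e := by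
        rw [h.mul_transpose_eq_one, Matrix.mul_one, Matrix.mul_assoc (of e)ᵀ]
    _ = (of e)ᵀ * diagonal (c * d) * of e := by rw [diagonal_mul_diagonal]; rfl

lemma specMat_one (h : ONFamily e) : specMat e 1 = 1 := by
  rw [specMat_eq_transpose_mul_diagonal_mul, diagonal_one', Matrix.mul_one,
    h.transpose_mul_eq_one]

lemma one_add_smul_specMat (h : ONFamily e) (c : Fin p → ℝ) (t : ℝ) :
    1 + t • specMat e c = specMat e (1 + t • c) := by
  calc 1 + t • specMat e c = (of e)ᵀ * (diagonal 1 + t • diagonal c) * of e := by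
        rw [← specMat_one h, specMat_eq_transpose_mul_diagonal_mul,
          specMat_eq_transpose_mul_diagonal_mul, Matrix.mul_add, Matrix.add_mul, Matrix.mul_smul,
          Matrix.smul_mul]
    _ = specMat e (1 + t • c) := by
        rw [specMat_eq_transpose_mul_diagonal_mul, ← diagonal_smul, diagonal_add]; rfl

lemma inv_specMat (h : ONFamily e) {c : Fin p → ℝ} (hc : ∀ j, c j ≠ 0) :
    (specMat e c)⁻¹ = specMat e c⁻¹ := by
  refine inv_eq_right_inv ?_
  rw [specMat_mul h, ← specMat_one h]
  exact congrArg _ <| funext fun j => mul_inv_cancel₀ (hc j)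

lemma specMat_mulVec_mulVec (h : ONFamily e) (c d w : Fin p → ℝ) :
    specMat e c *ᵥ (specMat e d *ᵥ w) = specMat e (c * d) *ᵥ w := by
  rw [mulVec_mulVec, specMat_mul h]

lemma l2norm_transpose_mulVec (h : ONFamily e) (v : Fin p → ℝ) :
    l2norm ((of e)ᵀ *ᵥ v) = l2norm v := by
  rw [l2norm_eq_sqrt_dotProduct, l2norm_eq_sqrt_dotProduct, dotProduct_mulVec,
    vecMul_transpose, mulVec_mulVec, h.mul_transpose_eq_one, one_mulVec]

lemma l2norm_specMat_mulVec (h : ONFamily e) (c w : Fin p → ℝ) :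
    l2norm (specMat e c *ᵥ w) = l2norm (c * (of e *ᵥ w)) := by
  rw [specMat_eq_transpose_mul_diagonal_mul, ← mulVec_mulVec, ← mulVec_mulVec,
    l2norm_transpose_mulVec h]
  congr 1
  ext j
  simp [mulVec_diagonal]

lemma l2norm_specMat_mulVec_le (h : ONFamily e) {c d : Fin p → ℝ}
    (hcd : ∀ j, |c j| ≤ |d j|) (w : Fin p → ℝ) :
    l2norm (specMat e c *ᵥ w) ≤ l2norm (specMat e d *ᵥ w) := by
  rw [l2norm_specMat_mulVec h, l2norm_specMat_mulVec h]
  refine l2norm_le_l2norm_of_abs_le fun j => ?_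
  simp only [Pi.mul_apply, abs_mul]
  exact mul_le_mul_of_nonneg_right (hcd j) (abs_nonneg _)

lemma l2norm_specMat_mulVec_specMat_mulVec_le (h : ONFamily e) (a : Fin p → ℝ)
    {c d : Fin p → ℝ} (hcd : ∀ j, |c j| ≤ |d j|) (w : Fin p → ℝ) :
    l2norm (specMat e a *ᵥ (specMat e c *ᵥ w)) ≤ l2norm (specMat e a *ᵥ (specMat e d *ᵥ w)) := by
  rw [specMat_mulVec_mulVec h, specMat_mulVec_mulVec h]
  refine l2norm_specMat_mulVec_le h (fun j => ?_) w
  simp only [Pi.mul_apply, abs_mul]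
  exact mul_le_mul_of_nonneg_left (hcd j) (abs_nonneg _)

lemma rate_le_rate_of_abs_le (h : ONFamily e) {σv : Fin p → ℝ} {ψ₁ ψ₂ : ℝ → ℝ}
    (hψ : ∀ j, |ψ₁ (σv j)| ≤ |ψ₂ (σv j)|) (N k : ℕ) (β : Fin p → ℝ) (σξ t : ℝ) :
    rate N e σv ψ₁ k β σξ t ≤ rate N e σv ψ₂ k β σξ t := by
  unfold rate
  gcongr ?_ + _ + _ + _
  exact l2norm_specMat_mulVec_specMat_mulVec_le h _ hψ _

lemma _root_.Real.exp_neg_le_inv_one_add {x : ℝ} (hx : -1 < x) : Real.exp (-x) ≤ (1 + x)⁻¹ := by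
  rw [Real.exp_neg]
  exact inv_anti₀ (by linarith) (by linarith [Real.add_one_le_exp x])

/-- (a) for every symmetric PSD `Σ = ∑ σ_j e_j e_jᵀ`, `t ≥ 0` and `β`,
`‖Σ^{1/2} exp(−tΣ) β‖₂ ≤ ‖Σ^{1/2}(I + tΣ)⁻¹ β‖₂`; (b) consequently, for any linear
regression problem, any `t ≥ 1` and any `b > 0`, the gradient-flow rate is at most the
ridge rate: `r^{GF}(V_{J*},V_{J*ᶜ}) ≤ r^{Ridge}(V_{J*},V_{J*ᶜ})`, where `r^{GF}` uses the
residual `ψ^{GF}(x) = exp(−tx)` and `r^{Ridge}` uses `ψ^{Ridge}(x) = 1/(xt+1)`. -/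
theorem gradient_flow_beats_ridge :
    (∀ (p : ℕ) (e : Fin p → Fin p → ℝ) (σv : Fin p → ℝ) (t : ℝ) (β : Fin p → ℝ),
      ONFamily e → (∀ j, 0 ≤ σv j) → 0 ≤ t →
      l2norm ((specMat e fun j => Real.sqrt (σv j)).mulVec
          ((specMat e fun j => Real.exp (-(t * σv j))).mulVec β)) ≤
        l2norm ((specMat e fun j => Real.sqrt (σv j)).mulVec
          (((1 + t • specMat e σv)⁻¹).mulVec β))) ∧
    (∀ (p N : ℕ) (e : Fin p → Fin p → ℝ) (σv : Fin p → ℝ) (βstar : Fin p → ℝ)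
        (σξ t b : ℝ) (kstar : ℕ),
      ONFamily e → (∀ j, 0 < σv j) → (∀ j k : Fin p, j ≤ k → σv k ≤ σv j) →
      0 < σξ → 1 ≤ t → 0 < b →
      IsEstimationDim p σv (b * t⁻¹) kstar →
      rate N e σv (fun x => Real.exp (-(t * x))) kstar βstar σξ t ≤
        rate N e σv (fun x => (x * t + 1)⁻¹) kstar βstar σξ t) := by
  refine ⟨fun p e σv t β h hσ ht => ?_, fun p N e σv βstar σξ t b kstar h hσ _ _ ht _ _ => ?_⟩
  · have htσ (j : Fin p) : 0 ≤ t * σv j := mul_nonneg ht (hσ j)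
    have hpos (j : Fin p) : 0 < 1 + t * σv j := by linarith [htσ j]
    rw [one_add_smul_specMat h, inv_specMat h (c := 1 + t • σv) fun j => (hpos j).ne']
    refine l2norm_specMat_mulVec_specMat_mulVec_le h _ (fun j => ?_) β
    simp only [Pi.inv_apply, Pi.add_apply, Pi.one_apply, Pi.smul_apply, smul_eq_mul]
    rw [abs_of_pos (Real.exp_pos _), abs_of_pos (inv_pos.2 (hpos j))]
    exact Real.exp_neg_le_inv_one_add (by linarith [htσ j])
  · refine rate_le_rate_of_abs_le h (fun j => ?_) N kstar βstar σξ t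
    have htσ : 0 ≤ t * σv j := mul_nonneg (by linarith) (hσ j).le
    rw [mul_comm (σv j), add_comm, abs_of_pos (Real.exp_pos _), abs_of_pos (by positivity)]
    exact Real.exp_neg_le_inv_one_add (by linarith)

end SpecFSD4
end

section
/- Plateau covariance saturation: suppose there exist 1 ≤ k < p, σ > ε > 0 with σ ≤ 1 such that σ₁ = … = σ_k = σ and σ_{k+1} = … = σ_p = ε, and suppose there is α* > 0 such that |⟨β*, e_j⟩| = α* for j ≤ k and ⟨β*, e_j⟩ = 0 for j > k. Let SNR := (‖Σ^{1/2}β*‖₂/σ_ξ)·σ√N/√(Tr(Σ_{Jᶜ}²)), where J = {1,…,k} (explicitly SNR = (α*/σ_ξ)·σ^{3/2}·√(kN/(p−k))/ε). Fix b ∈ (0,1), assume 4 < SNR ≤ b·σ/ε, and let I := {t > 1 : ε/b ≤ 1/t < σ} (for every t ∈ I the estimation dimension satisfies k* = k and β*_{J*ᶜ} = 0). Then inf_{t ∈ I} r^{GF}_t(V_{J*},V_{J*ᶜ}) ≤ inf_{t ∈ I} r^{Ridge}_t(V_{J*},V_{J*ᶜ}), where r^{GF}_t is the rate with residual function ψ_t^{GF}(x)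 = exp(−tx) and r^{Ridge}_t is the rate with residual function ψ_t^{Ridge}(x) = 1/(xt+1). -/
/-!
On the plateau every eigenvalue of the signal block `J` equals `σ`, so a residual function `ψ`
enters the rate only through the bias term, as the scalar `ψ σ` times a vector independent of
`ψ`. Since `exp (-x) ≤ (1 + x)⁻¹`, gradient flow has the smaller rate at every `t ∈ I`, and the
infima inherit the comparison because all rates are nonnegative.
-/

open Matrix

namespace SpecFSD5

noncomputable def l2norm {n : ℕ} (v : Fin n → ℝ) : ℝ := Real.sqrt (∑ i, v i ^ 2)

def ONFamily {p : ℕ} (e : Fin p → Fin p → ℝ) : Prop :=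
  (∀ j, ∑ i, e j i * e j i = 1) ∧ ∀ j k, j ≠ k → ∑ i, e j i * e k i = 0

noncomputable def specMat {p : ℕ} (e : Fin p → Fin p → ℝ) (c : Fin p → ℝ) :
    Matrix (Fin p) (Fin p) ℝ :=
  ∑ j, c j • Matrix.vecMulVec (e j) (e j)

/-- The rate `r^ψ_t(V_J,V_Jᶜ)` with `J = {1,…,k}` (0-indexed: `j < k`). -/
noncomputable def rate {p : ℕ} (N : ℕ) (e : Fin p → Fin p → ℝ) (σv : Fin p → ℝ)
    (ψ : ℝ → ℝ) (k : ℕ) (β : Fin p → ℝ) (σξ t : ℝ) : ℝ :=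
  l2norm ((specMat e fun j => if (j : ℕ) < k then Real.sqrt (σv j) else 0).mulVec
      ((specMat e fun j => ψ (σv j)).mulVec
        ((specMat e fun j => if (j : ℕ) < k then 1 else 0).mulVec β)))
    + σξ * Real.sqrt ((k : ℝ) / N)
    + l2norm ((specMat e fun j => if (j : ℕ) < k then 0 else Real.sqrt (σv j)).mulVec
        ((specMat e fun j => if (j : ℕ) < k then 0 else 1).mulVec β))
    + σξ * t * Real.sqrt (Matrix.trace
        ((specMat e fun j => if (j : ℕ) < k then 0 else σv j) *
          (specMat e fun j => if (j : ℕ) < k then 0 else σv j)) / N)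

end SpecFSD5

lemma csInf_image_le_csInf_image {α β : Type*} [ConditionallyCompleteLattice β]
    {f g : α → β} {S : Set α} (hf : BddBelow (f '' S)) (hfg : ∀ x ∈ S, f x ≤ g x) :
    sInf (f '' S) ≤ sInf (g '' S) := by
  rw [sInf_image', sInf_image']
  exact ciInf_mono (by rwa [← Set.image_eq_range]) fun x => hfg x x.2

lemma Real.exp_neg_le_inv_add_one {x : ℝ} (hx : -1 < x) : Real.exp (-x) ≤ (x + 1)⁻¹ := by
  rw [Real.exp_neg]
  exact inv_anti₀ (by linarith) (Real.add_one_le_exp x)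

namespace SpecFSD5

lemma l2norm_nonneg {n : ℕ} (v : Fin n → ℝ) : 0 ≤ l2norm v := Real.sqrt_nonneg _

lemma l2norm_smul {n : ℕ} (a : ℝ) (v : Fin n → ℝ) : l2norm (a • v) = |a| * l2norm v := by
  rw [l2norm, l2norm, ← Real.sqrt_sq_eq_abs, ← Real.sqrt_mul (sq_nonneg _), Finset.mul_sum]
  simp only [Pi.smul_apply, smul_eq_mul, mul_pow]

section specMat

variable {p : ℕ} {e : Fin p → Fin p → ℝ}

lemma specMat_smul (a : ℝ) (c : Fin p → ℝ) : specMat e (a • c) = a • specMat e c := by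
  simp only [specMat, Finset.smul_sum, Pi.smul_apply, smul_eq_mul, smul_smul]

lemma specMat_mul_specMat (he : ONFamily e) (c d : Fin p → ℝ) :
    specMat e c * specMat e d = specMat e (c * d) := by
  have hdot : ∀ j j', e j ⬝ᵥ e j' = if j = j' then 1 else 0 := by
    intro j j'
    split_ifs with h
    · exact h ▸ he.1 j
    · exact he.2 j j' h
  simp only [specMat, Finset.sum_mul_sum, smul_mul_smul, vecMulVec_mul_vecMulVec, hdot,
    ite_smul, one_smul, zero_smul]
  refine Finset.sum_congr rfl fun j _ => ?_
  rw [Finset.sum_eq_single j (fun j' _ h => by simp [Ne.symm h]) (by simp)]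
  simp

end specMat

section rate

variable {p : ℕ} {e : Fin p → Fin p → ℝ} {σv : Fin p → ℝ} {N k : ℕ} {β : Fin p → ℝ} {σξ t : ℝ}

lemma rate_nonneg (ψ : ℝ → ℝ) (hσξ : 0 ≤ σξ) (ht : 0 ≤ t) : 0 ≤ rate N e σv ψ k β σξ t := by
  unfold rate
  exact add_nonneg (add_nonneg (add_nonneg (l2norm_nonneg _) (by positivity)) (l2norm_nonneg _))
    (by positivity)

lemma plateau_bias_eq_smul (he : ONFamily e) {σ : ℝ} (hσv : ∀ j : Fin p, (j : ℕ) < k → σv j = σ)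
    (ψ : ℝ → ℝ) :
    (specMat e fun j => if (j : ℕ) < k then Real.sqrt (σv j) else 0) *ᵥ
        ((specMat e fun j => ψ (σv j)) *ᵥ ((specMat e fun j => if (j : ℕ) < k then 1 else 0) *ᵥ β))
      = ψ σ • ((specMat e fun j => if (j : ℕ) < k then Real.sqrt σ else 0) *ᵥ β) := by
  have hcoef : ((fun j : Fin p => if (j : ℕ) < k then Real.sqrt (σv j) else 0) *
      fun j : Fin p => ψ (σv j)) * (fun j : Fin p => if (j : ℕ) < k then (1 : ℝ) else 0)
      = ψ σ • fun j : Fin p => if (j : ℕ) < k then Real.sqrt σ else 0 := by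
    funext j
    by_cases hj : (j : ℕ) < k
    · simp [hj, hσv j hj, mul_comm]
    · simp [hj]
  rw [mulVec_mulVec, mulVec_mulVec, specMat_mul_specMat he, specMat_mul_specMat he, hcoef,
    specMat_smul, smul_mulVec]

lemma rate_le_rate_of_plateau (he : ONFamily e) {σ : ℝ}
    (hσv : ∀ j : Fin p, (j : ℕ) < k → σv j = σ) {ψ₁ ψ₂ : ℝ → ℝ} (hψ : |ψ₁ σ| ≤ |ψ₂ σ|) :
    rate N e σv ψ₁ k β σξ t ≤ rate N e σv ψ₂ k β σξ t := by
  unfold rate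
  gcongr
  rw [plateau_bias_eq_smul he hσv, plateau_bias_eq_smul he hσv, l2norm_smul, l2norm_smul]
  exact mul_le_mul_of_nonneg_right hψ (l2norm_nonneg _)

end rate

theorem plateau_saturation_general (p k N : ℕ) (σ ε σξ b : ℝ)
    (e : Fin p → Fin p → ℝ) (σv : Fin p → ℝ) (βstar : Fin p → ℝ)
    (hσξ : 0 < σξ)
    (he : ONFamily e)
    (hσv : ∀ j : Fin p, σv j = if (j : ℕ) < k then σ else ε) :
    sInf ((fun t => rate N e σv (fun x => Real.exp (-(t * x))) k βstar σξ t) ''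
        {t : ℝ | 1 < t ∧ ε / b ≤ t⁻¹ ∧ t⁻¹ < σ}) ≤
      sInf ((fun t => rate N e σv (fun x => (x * t + 1)⁻¹) k βstar σξ t) ''
        {t : ℝ | 1 < t ∧ ε / b ≤ t⁻¹ ∧ t⁻¹ < σ}) := by
  refine csInf_image_le_csInf_image ⟨0, ?_⟩ fun t ⟨ht1, _, htσ⟩ => ?_
  · rintro _ ⟨t, ht, rfl⟩
    exact rate_nonneg _ hσξ.le (zero_le_one.trans ht.1.le)
  · have hσt : 1 < σ * t := (inv_lt_iff_one_lt_mul₀ (by linarith)).mp htσ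
    refine rate_le_rate_of_plateau he (fun j hj => by rw [hσv j, if_pos hj]) ?_
    rw [abs_of_pos (Real.exp_pos _), abs_of_pos (inv_pos.mpr (by linarith)), mul_comm t]
    exact Real.exp_neg_le_inv_add_one (by linarith)

/-- plateau covariance saturation: with `σ₁=…=σ_k=σ`, `σ_{k+1}=…=σ_p=ε`,
`0 < ε < σ ≤ 1`, `|⟨β*,e_j⟩| = α*` for `j ≤ k` and `⟨β*,e_j⟩ = 0` otherwise, and
`SNR := (‖Σ^{1/2}β*‖₂/σ_ξ)·σ√N/√(Tr(Σ_{Jᶜ}²))` with `4 < SNR ≤ bσ/ε` for a fixed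
`b ∈ (0,1)`, letting `I := {t > 1 : ε/b ≤ 1/t < σ}` (on which the estimation dimension
equals `k`), one has
`inf_{t∈I} r^{GF}_t(V_{J*},V_{J*ᶜ}) ≤ inf_{t∈I} r^{Ridge}_t(V_{J*},V_{J*ᶜ})`. -/
theorem plateau_saturation (p k N : ℕ) (σ ε αs σξ b : ℝ)
    (e : Fin p → Fin p → ℝ) (σv : Fin p → ℝ) (βstar : Fin p → ℝ)
    (hk1 : 1 ≤ k) (hkp : k < p) (hN : 0 < N)
    (hε : 0 < ε) (hεσ : ε < σ) (hσ1 : σ ≤ 1) (hαs : 0 < αs) (hσξ : 0 < σξ)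
    (hb : 0 < b) (hb1 : b < 1)
    (he : ONFamily e)
    (hσv : ∀ j : Fin p, σv j = if (j : ℕ) < k then σ else ε)
    (hβ : ∀ j : Fin p,
      ((j : ℕ) < k → |∑ i, βstar i * e j i| = αs) ∧
      (k ≤ (j : ℕ) → ∑ i, βstar i * e j i = 0))
    (hSNRlow : 4 < l2norm ((specMat e fun j => Real.sqrt (σv j)).mulVec βstar) / σξ *
        (σ * Real.sqrt N / Real.sqrt (Matrix.trace
          ((specMat e fun j => if (j : ℕ) < k then 0 else σv j) *
            (specMat e fun j => if (j : ℕ) < k then 0 else σv j)))))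
    (hSNRhigh : l2norm ((specMat e fun j => Real.sqrt (σv j)).mulVec βstar) / σξ *
        (σ * Real.sqrt N / Real.sqrt (Matrix.trace
          ((specMat e fun j => if (j : ℕ) < k then 0 else σv j) *
            (specMat e fun j => if (j : ℕ) < k then 0 else σv j)))) ≤ b * σ / ε) :
    sInf ((fun t => rate N e σv (fun x => Real.exp (-(t * x))) k βstar σξ t) ''
        {t : ℝ | 1 < t ∧ ε / b ≤ t⁻¹ ∧ t⁻¹ < σ}) ≤
      sInf ((fun t => rate N e σv (fun x => (x * t + 1)⁻¹) k βstar σξ t) ''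
        {t : ℝ | 1 < t ∧ ε / b ≤ t⁻¹ ∧ t⁻¹ < σ}) :=
  plateau_saturation_general p k N σ ε σξ b e σv βstar hσξ he hσv

end SpecFSD5
end

section
/- There exists an absolute constant C > 1 such that for every t ≥ 1 and every symmetric positive semidefinite Σ ∈ ℝ^{p×p} with σ₁ := ‖Σ‖_op ≤ 1, the following hold for the contour C_t: (i) for every z ∈ C_t, the matrix Σ − zI_p is invertible and ‖Σ_t^{1/2}(Σ − zI_p)⁻¹Σ_t^{1/2}‖_op ≤ C; (ii) the contour integral of arclength satisfies ∮_{C_t} |dz|/|z + t⁻¹| ≤ C·(1 + log t), so that if a function φ_t holomorphic on a neighborhood of C_t satisfies |φ_t(z)| ≤ C₁/|z + t⁻¹| on C_t then ∮_{C_t} |φ_t(z)||dz| ≤ C·C₁·(1 + log t); (iii) if moreover Σ̂ ∈ ℝ^{p×p} is symmetric positive semidefinite with ‖Σ_t^{−1/2}(Σ̂ − Σ)Σ_t^{−1/2}‖_op ≤ □ for some □ < 1/9, then for every z ∈ C_t, Σ̂ − zI_p is invertible and ‖Σ_t^{1/2}(Σ̂ − zI_p)⁻¹Σ_t^{1/2}‖_op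 ≤ C. -/
open Matrix MeasureTheory

namespace SpecFSD10

noncomputable def l2norm {n : ℕ} (v : Fin n → ℝ) : ℝ := Real.sqrt (∑ i, v i ^ 2)

noncomputable def opNorm {m n : ℕ} (A : Matrix (Fin m) (Fin n) ℝ) : ℝ :=
  sSup ((fun v => l2norm (A.mulVec v)) '' {v : Fin n → ℝ | l2norm v ≤ 1})

noncomputable def l2normC {n : ℕ} (v : Fin n → ℂ) : ℝ := Real.sqrt (∑ i, ‖v i‖ ^ 2)

noncomputable def opNormC {m n : ℕ} (A : Matrix (Fin m) (Fin n) ℂ) : ℝ :=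
  sSup ((fun v => l2normC (A.mulVec v)) '' {v : Fin n → ℂ | l2normC v ≤ 1})

def ONFamily {p : ℕ} (e : Fin p → Fin p → ℝ) : Prop :=
  (∀ j, ∑ i, e j i * e j i = 1) ∧ ∀ j k, j ≠ k → ∑ i, e j i * e k i = 0

noncomputable def specMat {p : ℕ} (e : Fin p → Fin p → ℝ) (c : Fin p → ℝ) :
    Matrix (Fin p) (Fin p) ℝ :=
  ∑ j, c j • Matrix.vecMulVec (e j) (e j)

/-- The contour `C_t`: two segments `{x ± L(x)i : x ∈ [−1/(2t), σ₁]}` with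
`L(x) = α(x + 1/(2t))`, `α = 5(σ₁+t⁻¹)/(σ₁+t⁻¹/2)`, together with the right half-circle
`{z : |z − σ₁| = 5(σ₁+t⁻¹), Re z ≥ σ₁}`. -/
noncomputable def contourSet (t s1 : ℝ) : Set ℂ :=
  (fun x : ℝ => (x : ℂ) +
      ((5 * (s1 + t⁻¹) / (s1 + t⁻¹ / 2)) * (x + 1 / (2 * t)) : ℝ) * Complex.I) ''
      Set.Icc (-(1 / (2 * t))) s1 ∪
    (fun x : ℝ => (x : ℂ) -
      ((5 * (s1 + t⁻¹) / (s1 + t⁻¹ / 2)) * (x + 1 / (2 * t)) : ℝ) * Complex.I) ''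
      Set.Icc (-(1 / (2 * t))) s1 ∪
    {z : ℂ | ‖z - (s1 : ℂ)‖ = 5 * (s1 + t⁻¹) ∧ s1 ≤ z.re}

/-- The arclength integral `∮_{C_t} h(z) |dz|`, computed with the natural
parametrizations of the three pieces of `C_t` (the two segments have speed
`√(1+α²)` and the half-circle has speed `5(σ₁+t⁻¹)`). -/
noncomputable def contourIntegralAbs (t s1 : ℝ) (h : ℂ → ℝ) : ℝ :=
  (∫ x in (-(1 / (2 * t)))..s1,
      h ((x : ℂ) + ((5 * (s1 + t⁻¹) / (s1 + t⁻¹ / 2)) * (x + 1 / (2 * t)) : ℝ) *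
          Complex.I) * Real.sqrt (1 + (5 * (s1 + t⁻¹) / (s1 + t⁻¹ / 2)) ^ 2)) +
    (∫ x in (-(1 / (2 * t)))..s1,
      h ((x : ℂ) - ((5 * (s1 + t⁻¹) / (s1 + t⁻¹ / 2)) * (x + 1 / (2 * t)) : ℝ) *
          Complex.I) * Real.sqrt (1 + (5 * (s1 + t⁻¹) / (s1 + t⁻¹ / 2)) ^ 2)) +
    ∫ θ in (-(Real.pi / 2))..(Real.pi / 2),
      h ((s1 : ℂ) + ((5 * (s1 + t⁻¹) : ℝ) : ℂ) * Complex.exp ((θ : ℂ) * Complex.I)) *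
        (5 * (s1 + t⁻¹))

/-!
Write `Σ = Eᵀ diag(σ) E` with `E` the orthogonal matrix whose rows are the `e_j`, and
`S := Σ_t^{1/2} = Eᵀ diag(√(σ_j + t⁻¹)) E`. Then `Σ - z = S D S` with
`D = Eᵀ diag((σ_j - z)/(σ_j + t⁻¹)) E`, and every `z ∈ C_t` satisfies
`|σ_j - z| ≥ (σ_j + t⁻¹)/4` (on the segments `|Re(σ_j - z)| + |Im z| ≥ σ_j + 1/(2t)` because
`α ≥ 1`; on the arc by the triangle inequality), so `‖D⁻¹‖ ≤ 4`. Likewise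
`Σ̂ - z = S (D + Δ) S` with `Δ = S⁻¹(Σ̂ - Σ)S⁻¹`, `‖Δ‖ ≤ □ < 1/9`, and the Neumann-series
perturbation bound `‖(D + Δ)⁻¹‖ ≤ ‖D⁻¹‖/(1 - ‖D⁻¹‖‖Δ‖) ≤ 36/5` gives (iii); (i) is the case
`Σ̂ = Σ`. For (ii), `|z + t⁻¹| ≥ Re z + t⁻¹`: on each segment this is `x + t⁻¹`, whose reciprocal
integrates to `log (2t(σ₁ + t⁻¹)) ≤ log 4t`, and on the arc it is at least `σ₁ + t⁻¹`, so the arc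
contributes at most `5π`. The bound for `φ` follows by monotonicity of the arclength integral.
-/

open scoped Matrix.Norms.L2Operator
open Set

section DiagConj

variable {𝕜 : Type*} [RCLike 𝕜] {n : Type*} [Fintype n] [DecidableEq n]

lemma sSup_norm_mulVec_eq_norm (A : Matrix n n 𝕜) :
    sSup ((fun v => ‖WithLp.toLp 2 (A *ᵥ v)‖) '' {v | ‖WithLp.toLp 2 v‖ ≤ 1}) = ‖A‖ := by
  rw [Matrix.cstar_norm_def, ← ContinuousLinearMap.sSup_unitClosedBall_eq_norm,
    ← (WithLp.toLp_surjective 2).image_preimage (Metric.closedBall 0 1), Set.image_image]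
  congr 2
  ext v
  simp

lemma norm_toLp_mulVec_le (A : Matrix n n 𝕜) (x : n → 𝕜) :
    ‖WithLp.toLp 2 (A *ᵥ x)‖ ≤ ‖A‖ * ‖WithLp.toLp 2 x‖ :=
  A.l2_opNorm_mulVec (WithLp.toLp 2 x)

def diagConj (U : Matrix n n 𝕜) (d : n → 𝕜) : Matrix n n 𝕜 := star U * diagonal d * U

variable {U : Matrix n n 𝕜}

lemma diagConj_mul (hU : U ∈ Matrix.unitaryGroup n 𝕜) (d d' : n → 𝕜) :
    diagConj U d * diagConj U d' = diagConj U (d * d') := by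
  simp only [diagConj, mul_assoc]
  rw [← mul_assoc U, Unitary.mul_star_self_of_mem hU, one_mul, ← mul_assoc (diagonal d),
    diagonal_mul_diagonal]
  rfl

lemma diagConj_const (hU : U ∈ Matrix.unitaryGroup n 𝕜) (z : 𝕜) :
    diagConj U (fun _ => z) = z • 1 := by
  rw [diagConj, ← smul_one_eq_diagonal, mul_smul_comm, mul_one, smul_mul_assoc,
    Unitary.star_mul_self_of_mem hU]

lemma diagConj_sub (d d' : n → 𝕜) : diagConj U (d - d') = diagConj U d - diagConj U d' := by
  rw [diagConj, diagConj, diagConj, ← sub_mul, ← mul_sub, diagonal_sub]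
  rfl

lemma norm_diagConj (hU : U ∈ Matrix.unitaryGroup n 𝕜) (d : n → 𝕜) :
    ‖diagConj U d‖ = ‖d‖ := by
  rw [diagConj, CStarRing.norm_mul_mem_unitary _ hU,
    CStarRing.norm_mem_unitary_mul _ (Unitary.star_mem hU), Matrix.l2_opNorm_diagonal]

lemma diagConj_mul_inv (hU : U ∈ Matrix.unitaryGroup n 𝕜) {d : n → 𝕜} (hd : ∀ i, d i ≠ 0) :
    diagConj U d * diagConj U d⁻¹ = 1 := by
  rw [diagConj_mul hU, show d * d⁻¹ = fun _ => 1 from funext fun i => mul_inv_cancel₀ (hd i),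
    diagConj_const hU, one_smul]

lemma isUnit_diagConj (hU : U ∈ Matrix.unitaryGroup n 𝕜) {d : n → 𝕜} (hd : ∀ i, d i ≠ 0) :
    IsUnit (diagConj U d) :=
  IsUnit.of_mul_eq_one _ (diagConj_mul_inv hU hd)

lemma norm_inv_diagConj_le (hU : U ∈ Matrix.unitaryGroup n 𝕜) {d : n → 𝕜} (hd : ∀ i, d i ≠ 0)
    {M : ℝ} (hM : 0 ≤ M) (hdM : ∀ i, ‖(d i)⁻¹‖ ≤ M) : ‖(diagConj U d)⁻¹‖ ≤ M := by
  rw [Matrix.inv_eq_right_inv (diagConj_mul_inv hU hd), norm_diagConj hU]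
  exact (pi_norm_le_iff_of_nonneg hM).mpr hdM

end DiagConj

lemma isUnit_mul_mul_and_mul_inv_mul_eq {R : Type*} [CommRing R] {n : Type*} [Fintype n]
    [DecidableEq n] {S X : Matrix n n R} (hS : IsUnit S) (hX : IsUnit X) :
    IsUnit (S * X * S) ∧ S * (S * X * S)⁻¹ * S = X⁻¹ := by
  have hS' : IsUnit S.det := (Matrix.isUnit_iff_isUnit_det S).mp hS
  refine ⟨(hS.mul hX).mul hS, ?_⟩
  rw [Matrix.mul_inv_rev, Matrix.mul_inv_rev, ← mul_assoc, ← mul_assoc,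
    Matrix.mul_nonsing_inv _ hS', one_mul, mul_assoc, Matrix.nonsing_inv_mul _ hS', mul_one]

lemma isUnit_add_and_norm_inverse_le {R : Type*} [NormedRing R] [HasSummableGeomSeries R]
    {D E : R} (hD : IsUnit D) (h : ‖Ring.inverse D‖ * ‖E‖ < 1) :
    IsUnit (D + E) ∧
      ‖Ring.inverse (D + E)‖ ≤ ‖Ring.inverse D‖ / (1 - ‖Ring.inverse D‖ * ‖E‖) := by
  have hunit : IsUnit (D + E) := by
    have hsum : D + E = D * (1 - -(Ring.inverse D * E)) := by
      rw [sub_neg_eq_add, mul_add, mul_one, ← mul_assoc, Ring.mul_inverse_cancel D hD, one_mul]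
    rw [hsum]
    refine hD.mul (isUnit_one_sub_of_norm_lt_one ?_)
    rw [norm_neg]
    exact (norm_mul_le _ _).trans_lt h
  refine ⟨hunit, ?_⟩
  set G := Ring.inverse (D + E)
  have hG : G = Ring.inverse D - G * E * Ring.inverse D :=
    calc G = G * (D * Ring.inverse D) := by rw [Ring.mul_inverse_cancel D hD, mul_one]
      _ = G * (D + E) * Ring.inverse D - G * E * Ring.inverse D := by noncomm_ring
      _ = Ring.inverse D - G * E * Ring.inverse D := by
        rw [Ring.inverse_mul_cancel _ hunit, one_mul]
  have hGle : ‖G‖ ≤ ‖Ring.inverse D‖ + ‖G‖ * ‖E‖ * ‖Ring.inverse D‖ :=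
    calc ‖G‖ ≤ ‖Ring.inverse D‖ + ‖G * E * Ring.inverse D‖ := by
          nth_rewrite 1 [hG]; exact norm_sub_le _ _
      _ ≤ _ := by gcongr; exact norm_mul₃_le
  rw [le_div_iff₀ (by linarith)]
  linarith

section Complexification

variable {n : Type*} [Fintype n]

lemma norm_sq_eq_norm_sq_re_add_norm_sq_im (w : EuclideanSpace ℂ n) :
    ‖w‖ ^ 2 =
      ‖WithLp.toLp 2 (fun i => (w i).re)‖ ^ 2 + ‖WithLp.toLp 2 (fun i => (w i).im)‖ ^ 2 := by
  simp only [EuclideanSpace.norm_sq_eq, ← Finset.sum_add_distrib, Complex.sq_norm,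
    Complex.normSq_apply, Real.norm_eq_abs, sq_abs]
  congr 1; ext i; ring

variable [DecidableEq n]

lemma map_ofReal_mem_unitaryGroup {U : Matrix n n ℝ} (hU : U ∈ Matrix.unitaryGroup n ℝ) :
    U.map ((↑) : ℝ → ℂ) ∈ Matrix.unitaryGroup n ℂ := by
  have := congrArg Complex.ofRealHom.mapMatrix (Matrix.mem_unitaryGroup_iff.mp hU)
  rw [map_mul, map_one] at this
  rwa [Matrix.mem_unitaryGroup_iff, Matrix.star_eq_conjTranspose,
    ← Matrix.conjTranspose_map _ (fun x => by simp)]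

lemma norm_map_ofReal_le (A : Matrix n n ℝ) : ‖A.map ((↑) : ℝ → ℂ)‖ ≤ ‖A‖ := by
  rw [Matrix.cstar_norm_def]
  refine ContinuousLinearMap.opNorm_le_bound _ (norm_nonneg _) fun v => ?_
  have hre : (fun i => (Matrix.toEuclideanCLM (𝕜 := ℂ) (A.map ((↑) : ℝ → ℂ)) v i).re) =
      A *ᵥ fun i => (v i).re := by
    ext i; simp [Matrix.mulVec, dotProduct, Complex.re_sum]
  have him : (fun i => (Matrix.toEuclideanCLM (𝕜 := ℂ) (A.map ((↑) : ℝ → ℂ)) v i).im) =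
      A *ᵥ fun i => (v i).im := by
    ext i; simp [Matrix.mulVec, dotProduct, Complex.im_sum]
  have h1 := norm_toLp_mulVec_le A fun i => (v i).re
  have h2 := norm_toLp_mulVec_le A fun i => (v i).im
  refine le_of_sq_le_sq ?_ (by positivity)
  rw [mul_pow, norm_sq_eq_norm_sq_re_add_norm_sq_im, norm_sq_eq_norm_sq_re_add_norm_sq_im v,
    mul_add, hre, him, ← mul_pow, ← mul_pow]
  exact add_le_add (pow_le_pow_left₀ (norm_nonneg _) h1 2) (pow_le_pow_left₀ (norm_nonneg _) h2 2)

end Complexification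

lemma opNorm_eq_norm {n : ℕ} (A : Matrix (Fin n) (Fin n) ℝ) : opNorm A = ‖A‖ := by
  simpa [opNorm, l2norm, EuclideanSpace.norm_eq] using sSup_norm_mulVec_eq_norm A

lemma opNorm_nonneg {n : ℕ} (A : Matrix (Fin n) (Fin n) ℝ) : 0 ≤ opNorm A :=
  opNorm_eq_norm A ▸ norm_nonneg A

lemma opNormC_eq_norm {n : ℕ} (A : Matrix (Fin n) (Fin n) ℂ) : opNormC A = ‖A‖ := by
  simpa [opNormC, l2normC, EuclideanSpace.norm_eq] using sSup_norm_mulVec_eq_norm A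

section SpectralFamily

variable {p : ℕ} {e : Fin p → Fin p → ℝ}

lemma of_mem_unitaryGroup (he : ONFamily e) : Matrix.of e ∈ Matrix.unitaryGroup (Fin p) ℝ := by
  rw [Matrix.mem_unitaryGroup_iff]
  ext j k
  simp only [Matrix.mul_apply, Matrix.star_apply, Matrix.of_apply, star_trivial, Matrix.one_apply]
  split_ifs with hjk
  · subst hjk; exact he.1 j
  · exact he.2 j k hjk

lemma specMat_eq_diagConj (e : Fin p → Fin p → ℝ) (c : Fin p → ℝ) :
    specMat e c = diagConj (Matrix.of e) c := by
  ext i k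
  simp [specMat, diagConj, Matrix.sum_apply, Matrix.mul_apply, Matrix.diagonal,
    Matrix.vecMulVec_apply, mul_comm, mul_left_comm]

lemma map_specMat_eq_diagConj (e : Fin p → Fin p → ℝ) (c : Fin p → ℝ) :
    (specMat e c).map ((↑) : ℝ → ℂ) =
      diagConj ((Matrix.of e).map (↑)) (fun j => (c j : ℂ)) := by
  ext i k
  simp [specMat, diagConj, Matrix.sum_apply, Matrix.mul_apply, Matrix.diagonal,
    Matrix.vecMulVec_apply, mul_comm, mul_left_comm]

lemma le_opNorm_specMat (he : ONFamily e) (c : Fin p → ℝ) (j : Fin p) :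
    c j ≤ opNorm (specMat e c) := by
  rw [opNorm_eq_norm, specMat_eq_diagConj, norm_diagConj (of_mem_unitaryGroup he)]
  exact (le_abs_self _).trans (norm_le_pi_norm c j)

lemma isUnit_map_specMat (he : ONFamily e) {c : Fin p → ℝ} (hc : ∀ j, c j ≠ 0) :
    IsUnit ((specMat e c).map ((↑) : ℝ → ℂ)) := by
  rw [map_specMat_eq_diagConj]
  exact isUnit_diagConj (map_ofReal_mem_unitaryGroup (of_mem_unitaryGroup he)) fun j =>
    Complex.ofReal_ne_zero.mpr (hc j)

variable {w : Fin p → ℝ}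

lemma map_specMat_sub_smul_eq (he : ONFamily e) (hw : ∀ j, 0 < w j) (σ : Fin p → ℝ) (z : ℂ) :
    (specMat e σ).map ((↑) : ℝ → ℂ) - z • 1 =
      (specMat e fun j => √(w j)).map (↑) *
        diagConj ((Matrix.of e).map (↑)) (fun j => ((σ j : ℂ) - z) / (w j : ℂ)) *
        (specMat e fun j => √(w j)).map (↑) := by
  have hU := map_ofReal_mem_unitaryGroup (of_mem_unitaryGroup he)
  rw [map_specMat_eq_diagConj, map_specMat_eq_diagConj, ← diagConj_const hU, ← diagConj_sub,
    diagConj_mul hU, diagConj_mul hU]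
  congr 1
  funext j
  have hsq : ((√(w j) : ℝ) : ℂ) * ((√(w j) : ℝ) : ℂ) = w j := by
    rw [← Complex.ofReal_mul, Real.mul_self_sqrt (hw j).le]
  have hw' : (w j : ℂ) ≠ 0 := Complex.ofReal_ne_zero.mpr (hw j).ne'
  simp only [Pi.mul_apply, Pi.sub_apply]
  rw [mul_comm, ← mul_assoc, hsq]
  field_simp

lemma map_sub_eq_mul_mul (he : ONFamily e) (hw : ∀ j, 0 < w j) (A B : Matrix (Fin p) (Fin p) ℝ) :
    A.map ((↑) : ℝ → ℂ) - B.map (↑) =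
      (specMat e fun j => √(w j)).map (↑) *
        ((specMat e fun j => (√(w j))⁻¹) * (A - B) * specMat e fun j => (√(w j))⁻¹).map (↑) *
        (specMat e fun j => √(w j)).map (↑) := by
  have hU := of_mem_unitaryGroup he
  have hS : specMat e (fun j => √(w j)) * specMat e (fun j => (√(w j))⁻¹) = 1 := by
    rw [specMat_eq_diagConj, specMat_eq_diagConj]
    exact diagConj_mul_inv hU fun j => (Real.sqrt_pos.mpr (hw j)).ne'
  have hS' := mul_eq_one_comm.mp hS
  change Complex.ofRealHom.mapMatrix A - Complex.ofRealHom.mapMatrix B =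
    Complex.ofRealHom.mapMatrix _ * Complex.ofRealHom.mapMatrix _ * Complex.ofRealHom.mapMatrix _
  rw [← map_sub, ← map_mul, ← map_mul]
  congr 1
  simp only [← mul_assoc, hS, one_mul]
  rw [mul_assoc, hS', mul_one]

end SpectralFamily

lemma isUnit_and_opNormC_whitened_resolvent_le {p : ℕ} {e : Fin p → Fin p → ℝ}
    (he : ONFamily e) {w σ : Fin p → ℝ} (hw : ∀ j, 0 < w j) {z : ℂ} {M : ℝ} (hM : 0 ≤ M)
    (hσz : ∀ j, w j ≤ M * ‖(σ j : ℂ) - z‖) (A : Matrix (Fin p) (Fin p) ℝ) {δ : ℝ}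
    (hMδ : M * δ < 1)
    (hA : opNorm ((specMat e fun j => (√(w j))⁻¹) * (A - specMat e σ) *
      specMat e fun j => (√(w j))⁻¹) ≤ δ) :
    IsUnit (A.map ((↑) : ℝ → ℂ) - z • 1) ∧
      opNormC ((specMat e fun j => √(w j)).map (↑) * (A.map ((↑) : ℝ → ℂ) - z • 1)⁻¹ *
        (specMat e fun j => √(w j)).map (↑)) ≤ M / (1 - M * δ) := by
  have hU := map_ofReal_mem_unitaryGroup (of_mem_unitaryGroup he)
  set S := (specMat e fun j => √(w j)).map ((↑) : ℝ → ℂ)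
  set D := diagConj ((Matrix.of e).map (↑)) (fun j => ((σ j : ℂ) - z) / (w j : ℂ))
  set E := ((specMat e fun j => (√(w j))⁻¹) * (A - specMat e σ) *
    specMat e fun j => (√(w j))⁻¹).map ((↑) : ℝ → ℂ)
  have hdist : ∀ j, 0 < ‖(σ j : ℂ) - z‖ := fun j =>
    pos_of_mul_pos_right ((hw j).trans_le (hσz j)) hM
  have hd : ∀ j, ((σ j : ℂ) - z) / (w j : ℂ) ≠ 0 := fun j =>
    div_ne_zero (norm_pos_iff.mp (hdist j)) (Complex.ofReal_ne_zero.mpr (hw j).ne')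
  have hS : IsUnit S := isUnit_map_specMat he fun j => (Real.sqrt_pos.mpr (hw j)).ne'
  have hDinv : ‖Ring.inverse D‖ ≤ M := by
    rw [← Matrix.nonsing_inv_eq_ringInverse]
    refine norm_inv_diagConj_le hU hd hM fun j => ?_
    rw [norm_inv, norm_div, Complex.norm_real, Real.norm_eq_abs, abs_of_pos (hw j), inv_div,
      div_le_iff₀ (hdist j)]
    exact hσz j
  have hE : ‖E‖ ≤ δ := (norm_map_ofReal_le _).trans (opNorm_eq_norm _ ▸ hA)
  have hsmall : ‖Ring.inverse D‖ * ‖E‖ ≤ M * δ :=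
    mul_le_mul hDinv hE (norm_nonneg _) hM
  obtain ⟨hX, hXinv⟩ := isUnit_add_and_norm_inverse_le (isUnit_diagConj hU hd)
    (hsmall.trans_lt hMδ)
  have hfac : A.map ((↑) : ℝ → ℂ) - z • 1 = S * (D + E) * S := by
    rw [mul_add, add_mul, ← map_specMat_sub_smul_eq he hw σ z,
      ← map_sub_eq_mul_mul he hw A (specMat e σ)]
    abel
  obtain ⟨hunit, hconj⟩ := isUnit_mul_mul_and_mul_inv_mul_eq hS hX
  rw [hfac, opNormC_eq_norm, hconj, Matrix.nonsing_inv_eq_ringInverse]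
  refine ⟨hunit, hXinv.trans ?_⟩
  gcongr

section Contour

lemma re_ofReal_add_ofReal_mul_I (x y : ℝ) : ((x : ℂ) + (y : ℂ) * Complex.I).re = x := by simp

lemma re_ofReal_sub_ofReal_mul_I (x y : ℝ) : ((x : ℂ) - (y : ℂ) * Complex.I).re = x := by simp

lemma im_ofReal_add_ofReal_mul_I (x y : ℝ) : ((x : ℂ) + (y : ℂ) * Complex.I).im = y := by simp

lemma im_ofReal_sub_ofReal_mul_I (x y : ℝ) : ((x : ℂ) - (y : ℂ) * Complex.I).im = -y := by simp

lemma re_add_le_norm_add_ofReal (z : ℂ) (a : ℝ) : z.re + a ≤ ‖z + (a : ℂ)‖ := by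
  simpa using Complex.re_le_norm (z + (a : ℂ))

variable {t s1 : ℝ}

lemma one_le_contour_slope (ht : 0 < t) (hs : 0 ≤ s1) :
    1 ≤ 5 * (s1 + t⁻¹) / (s1 + t⁻¹ / 2) := by
  have : 0 < t⁻¹ := inv_pos.mpr ht
  rw [le_div_iff₀ (by positivity)]
  linarith

lemma contour_slope_le_ten (ht : 0 < t) (hs : 0 ≤ s1) :
    5 * (s1 + t⁻¹) / (s1 + t⁻¹ / 2) ≤ 10 := by
  have : 0 < t⁻¹ := inv_pos.mpr ht
  rw [div_le_iff₀ (by positivity)]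
  linarith

lemma sqrt_one_add_contour_slope_sq_le (ht : 0 < t) (hs : 0 ≤ s1) :
    √(1 + (5 * (s1 + t⁻¹) / (s1 + t⁻¹ / 2)) ^ 2) ≤ 11 := by
  have h1 := one_le_contour_slope ht hs
  have h10 := contour_slope_le_ten ht hs
  exact Real.sqrt_le_iff.mpr ⟨by norm_num, by nlinarith⟩

lemma re_add_inv_pos_of_mem_contourSet (ht : 0 < t) (hs : 0 ≤ s1) {z : ℂ}
    (hz : z ∈ contourSet t s1) : 0 < z.re + t⁻¹ := by
  have h2t : 1 / (2 * t) < t⁻¹ := by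
    rw [one_div, mul_inv]; linarith [inv_pos.mpr ht]
  rcases hz with (⟨x, hx, rfl⟩ | ⟨x, hx, rfl⟩) | ⟨-, hre⟩
  · rw [re_ofReal_add_ofReal_mul_I]
    linarith [hx.1]
  · rw [re_ofReal_sub_ofReal_mul_I]
    linarith [hx.1]
  · linarith [inv_pos.mpr ht]

lemma norm_add_inv_pos_of_mem_contourSet (ht : 0 < t) (hs : 0 ≤ s1) {z : ℂ}
    (hz : z ∈ contourSet t s1) : 0 < ‖z + ((t⁻¹ : ℝ) : ℂ)‖ := by
  linarith [re_add_inv_pos_of_mem_contourSet ht hs hz, re_add_le_norm_add_ofReal z t⁻¹]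

lemma le_norm_sub_of_re_add_le_abs_im {σ x a : ℝ} {w : ℂ} (hre : w.re = x)
    (him : x + a ≤ |w.im|) : (σ + a) / 2 ≤ ‖(σ : ℂ) - w‖ := by
  have hsum : |((σ : ℂ) - w).re| + |((σ : ℂ) - w).im| ≤ 2 * ‖(σ : ℂ) - w‖ := by
    linarith [Complex.abs_re_le_norm ((σ : ℂ) - w), Complex.abs_im_le_norm ((σ : ℂ) - w)]
  simp only [Complex.sub_re, Complex.ofReal_re, Complex.sub_im, Complex.ofReal_im, zero_sub,
    abs_neg, hre] at hsum
  linarith [le_abs_self (σ - x)]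

lemma le_abs_contour_height (ht : 0 < t) (hs : 0 ≤ s1) {x : ℝ} (hx : -(1 / (2 * t)) ≤ x) :
    x + 1 / (2 * t) ≤ |5 * (s1 + t⁻¹) / (s1 + t⁻¹ / 2) * (x + 1 / (2 * t))| := by
  have hu : 0 ≤ x + 1 / (2 * t) := by linarith
  have hα := one_le_contour_slope ht hs
  rw [abs_of_nonneg (by positivity)]
  nlinarith

lemma le_norm_sub_of_mem_contourSet {σ : ℝ} (ht : 0 < t) (hσ0 : 0 ≤ σ) (hσ : σ ≤ s1) {z : ℂ}
    (hz : z ∈ contourSet t s1) : (σ + t⁻¹) / 4 ≤ ‖(σ : ℂ) - z‖ := by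
  have hquarter : (σ + t⁻¹) / 4 ≤ (σ + 1 / (2 * t)) / 2 := by
    rw [one_div, mul_inv]; linarith
  rcases hz with (⟨x, hx, rfl⟩ | ⟨x, hx, rfl⟩) | ⟨hcirc, -⟩
  · refine hquarter.trans (le_norm_sub_of_re_add_le_abs_im (re_ofReal_add_ofReal_mul_I _ _) ?_)
    rw [im_ofReal_add_ofReal_mul_I]
    exact le_abs_contour_height ht (hσ0.trans hσ) hx.1
  · refine hquarter.trans (le_norm_sub_of_re_add_le_abs_im (re_ofReal_sub_ofReal_mul_I _ _) ?_)
    rw [im_ofReal_sub_ofReal_mul_I, abs_neg]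
    exact le_abs_contour_height ht (hσ0.trans hσ) hx.1
  · have hσs : ‖(σ : ℂ) - s1‖ = s1 - σ := by
      rw [← Complex.ofReal_sub, Complex.norm_real, Real.norm_eq_abs, abs_of_nonpos (by linarith)]
      ring
    have := norm_sub_le_norm_sub_add_norm_sub z (σ : ℂ) s1
    rw [norm_sub_rev z (σ : ℂ), hcirc, hσs] at this
    linarith [inv_pos.mpr ht]

lemma le_re_add_mul_exp {s r θ : ℝ} (hr : 0 ≤ r) (hθ : θ ∈ Icc (-(Real.pi / 2)) (Real.pi / 2)) :
    s ≤ ((s : ℂ) + (r : ℂ) * Complex.exp ((θ : ℂ) * Complex.I)).re := by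
  rw [Complex.add_re, Complex.ofReal_re, Complex.re_ofReal_mul, Complex.exp_ofReal_mul_I_re]
  nlinarith [Real.cos_nonneg_of_mem_Icc hθ]

lemma arc_mem_contourSet (ht : 0 < t) (hs : 0 ≤ s1) {θ : ℝ}
    (hθ : θ ∈ Icc (-(Real.pi / 2)) (Real.pi / 2)) :
    (s1 : ℂ) + ((5 * (s1 + t⁻¹) : ℝ) : ℂ) * Complex.exp ((θ : ℂ) * Complex.I) ∈
      contourSet t s1 := by
  have hr : 0 ≤ 5 * (s1 + t⁻¹) := by positivity
  refine Or.inr ⟨?_, le_re_add_mul_exp hr hθ⟩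
  rw [add_sub_cancel_left, norm_mul, Complex.norm_exp_ofReal_mul_I, Complex.norm_real,
    Real.norm_eq_abs, abs_of_nonneg hr, mul_one]

lemma intervalIntegral_comp_mul_mono {a b c : ℝ} (hab : a ≤ b) (hc : 0 ≤ c) {γ : ℝ → ℂ}
    (hγ : Continuous γ) {s : Set ℂ} (hγs : MapsTo γ (Icc a b) s) {h g : ℂ → ℝ}
    (hh : ContinuousOn h s) (hg : ContinuousOn g s) (hle : ∀ z ∈ s, h z ≤ g z) :
    ∫ x in a..b, h (γ x) * c ≤ ∫ x in a..b, g (γ x) * c := by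
  refine intervalIntegral.integral_mono_on hab ?_ ?_ fun x hx =>
    mul_le_mul_of_nonneg_right (hle _ (hγs hx)) hc
  · exact ((hh.comp hγ.continuousOn hγs).mul continuousOn_const).intervalIntegrable_of_Icc hab
  · exact ((hg.comp hγ.continuousOn hγs).mul continuousOn_const).intervalIntegrable_of_Icc hab

lemma contourIntegralAbs_mono (ht : 0 < t) (hs : 0 ≤ s1) {h g : ℂ → ℝ}
    (hh : ContinuousOn h (contourSet t s1)) (hg : ContinuousOn g (contourSet t s1))
    (hle : ∀ z ∈ contourSet t s1, h z ≤ g z) :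
    contourIntegralAbs t s1 h ≤ contourIntegralAbs t s1 g := by
  have hab : -(1 / (2 * t)) ≤ s1 := by linarith [show 0 < 1 / (2 * t) by positivity]
  have hπ : -(Real.pi / 2) ≤ Real.pi / 2 := by linarith [Real.pi_pos]
  have hc := Real.sqrt_nonneg (1 + (5 * (s1 + t⁻¹) / (s1 + t⁻¹ / 2)) ^ 2)
  have hr : 0 ≤ 5 * (s1 + t⁻¹) := by positivity
  unfold contourIntegralAbs
  gcongr ?_ + ?_ + ?_
  · exact intervalIntegral_comp_mul_mono hab hc (by fun_prop)
      (fun x hx => Or.inl (Or.inl (mem_image_of_mem _ hx))) hh hg hle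
  · exact intervalIntegral_comp_mul_mono hab hc (by fun_prop)
      (fun x hx => Or.inl (Or.inr (mem_image_of_mem _ hx))) hh hg hle
  · exact intervalIntegral_comp_mul_mono hπ hr (by fun_prop)
      (fun θ hθ => arc_mem_contourSet ht hs hθ) hh hg hle

lemma contourIntegralAbs_const_mul (c : ℝ) (h : ℂ → ℝ) :
    contourIntegralAbs t s1 (fun z => c * h z) = c * contourIntegralAbs t s1 h := by
  simp only [contourIntegralAbs, mul_assoc, intervalIntegral.integral_const_mul]
  ring

lemma integral_one_div_add_inv_le (ht : 1 ≤ t) (hs0 : 0 ≤ s1) (hs1 : s1 ≤ 1) :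
    ∫ x in (-(1 / (2 * t)))..s1, 1 / (x + t⁻¹) ≤ Real.log 4 + Real.log t := by
  have ht0 : 0 < t := by linarith
  have hlow : -(1 / (2 * t)) + t⁻¹ = 1 / (2 * t) := by field_simp; ring
  rw [intervalIntegral.integral_comp_add_right (fun x => 1 / x), hlow]
  simp only [one_div]
  rw [integral_inv_of_pos (by positivity) (by positivity), ← Real.log_mul (by norm_num) ht0.ne']
  refine Real.log_le_log (by positivity) ?_
  rw [div_le_iff₀ (by positivity)]
  field_simp
  nlinarith

lemma integral_segment_le (ht : 1 ≤ t) (hs0 : 0 ≤ s1) (hs1 : s1 ≤ 1) {γ : ℝ → ℂ}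
    (hγ : Continuous γ) (hre : ∀ x, (γ x).re = x) {c : ℝ} (hc : 0 ≤ c) :
    ∫ x in (-(1 / (2 * t)))..s1, 1 / ‖γ x + ((t⁻¹ : ℝ) : ℂ)‖ * c ≤
      c * (Real.log 4 + Real.log t) := by
  have ht0 : 0 < t := by linarith
  have hab : -(1 / (2 * t)) ≤ s1 := by linarith [show 0 < 1 / (2 * t) by positivity]
  have hpos : ∀ x ∈ Icc (-(1 / (2 * t))) s1, 0 < x + t⁻¹ := fun x hx => by
    have : 1 / (2 * t) < t⁻¹ := by rw [one_div, mul_inv]; linarith [inv_pos.mpr ht0]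
    linarith [hx.1]
  have hnorm : ∀ x, x + t⁻¹ ≤ ‖γ x + ((t⁻¹ : ℝ) : ℂ)‖ := fun x => by
    simpa only [hre] using re_add_le_norm_add_ofReal (γ x) t⁻¹
  calc ∫ x in (-(1 / (2 * t)))..s1, 1 / ‖γ x + ((t⁻¹ : ℝ) : ℂ)‖ * c
      ≤ ∫ x in (-(1 / (2 * t)))..s1, 1 / (x + t⁻¹) * c := by
        refine intervalIntegral.integral_mono_on hab ?_ ?_ fun x hx =>
          mul_le_mul_of_nonneg_right (one_div_le_one_div_of_le (hpos x hx) (hnorm x)) hc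
        · refine (ContinuousOn.mul ?_ continuousOn_const).intervalIntegrable_of_Icc hab
          exact continuousOn_const.div (by fun_prop) fun x hx =>
            ((hpos x hx).trans_le (hnorm x)).ne'
        · refine (ContinuousOn.mul ?_ continuousOn_const).intervalIntegrable_of_Icc hab
          exact continuousOn_const.div (by fun_prop) fun x hx => (hpos x hx).ne'
    _ = (∫ x in (-(1 / (2 * t)))..s1, 1 / (x + t⁻¹)) * c :=
        intervalIntegral.integral_mul_const _ _
    _ ≤ (Real.log 4 + Real.log t) * c :=
        mul_le_mul_of_nonneg_right (integral_one_div_add_inv_le ht hs0 hs1) hc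
    _ = c * (Real.log 4 + Real.log t) := mul_comm _ _

lemma integral_arc_le (ht : 0 < t) (hs : 0 ≤ s1) :
    ∫ θ in (-(Real.pi / 2))..(Real.pi / 2),
      1 / ‖(s1 : ℂ) + ((5 * (s1 + t⁻¹) : ℝ) : ℂ) * Complex.exp ((θ : ℂ) * Complex.I) +
        ((t⁻¹ : ℝ) : ℂ)‖ * (5 * (s1 + t⁻¹)) ≤ 5 * Real.pi := by
  have hr : 0 < s1 + t⁻¹ := by positivity
  refine (Real.le_norm_self _).trans ((intervalIntegral.norm_integral_le_of_norm_le_const (C := 5)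
    fun θ hθ => ?_).trans_eq ?_)
  · have hθ' : θ ∈ Icc (-(Real.pi / 2)) (Real.pi / 2) := by
      rw [uIoc_of_le (by linarith [Real.pi_pos])] at hθ
      exact ⟨hθ.1.le, hθ.2⟩
    have hre := le_re_add_mul_exp (s := s1) (by positivity : 0 ≤ 5 * (s1 + t⁻¹)) hθ'
    set z := (s1 : ℂ) + ((5 * (s1 + t⁻¹) : ℝ) : ℂ) * Complex.exp ((θ : ℂ) * Complex.I)
    have hnorm : s1 + t⁻¹ ≤ ‖z + ((t⁻¹ : ℝ) : ℂ)‖ := by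
      linarith [re_add_le_norm_add_ofReal z t⁻¹]
    rw [Real.norm_eq_abs, abs_of_nonneg (by positivity), one_div,
      inv_mul_le_iff₀ (hr.trans_le hnorm)]
    linarith
  · rw [abs_of_nonneg (by linarith [Real.pi_pos])]
    ring

lemma contourIntegralAbs_one_div_norm_le (ht : 1 ≤ t) (hs0 : 0 ≤ s1) (hs1 : s1 ≤ 1) :
    contourIntegralAbs t s1 (fun z => 1 / ‖z + ((t⁻¹ : ℝ) : ℂ)‖) ≤ 100 * (1 + Real.log t) := by
  have ht0 : 0 < t := by linarith
  have hc : 0 ≤ √(1 + (5 * (s1 + t⁻¹) / (s1 + t⁻¹ / 2)) ^ 2) := Real.sqrt_nonneg _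
  have hupper := integral_segment_le ht hs0 hs1 (by fun_prop)
    (fun x => re_ofReal_add_ofReal_mul_I _ _) hc (γ := fun x : ℝ => (x : ℂ) +
      ((5 * (s1 + t⁻¹) / (s1 + t⁻¹ / 2)) * (x + 1 / (2 * t)) : ℝ) * Complex.I)
  have hlower := integral_segment_le ht hs0 hs1 (by fun_prop)
    (fun x => re_ofReal_sub_ofReal_mul_I _ _) hc (γ := fun x : ℝ => (x : ℂ) -
      ((5 * (s1 + t⁻¹) / (s1 + t⁻¹ / 2)) * (x + 1 / (2 * t)) : ℝ) * Complex.I)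
  have harc := integral_arc_le ht0 hs0
  have hlog4 : Real.log 4 ≤ 3 := by
    linarith [Real.log_le_sub_one_of_pos (show (0 : ℝ) < 4 by norm_num)]
  have hlogt : 0 ≤ Real.log t := Real.log_nonneg ht
  have hlog4' : 0 ≤ Real.log 4 := Real.log_nonneg (by norm_num)
  have hspeed : √(1 + (5 * (s1 + t⁻¹) / (s1 + t⁻¹ / 2)) ^ 2) * (Real.log 4 + Real.log t) ≤
      11 * (3 + Real.log t) :=
    mul_le_mul (sqrt_one_add_contour_slope_sq_le ht0 hs0) (by linarith) (by linarith) (by norm_num)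
  unfold contourIntegralAbs
  linarith [Real.pi_lt_d2]

lemma contourIntegralAbs_norm_le_of_le_div (ht : 1 ≤ t) (hs0 : 0 ≤ s1) (hs1 : s1 ≤ 1)
    {C₁ : ℝ} {φ : ℂ → ℂ} (hφ : ContinuousOn φ (contourSet t s1))
    (hb : ∀ z ∈ contourSet t s1, ‖φ z‖ ≤ C₁ / ‖z + ((t⁻¹ : ℝ) : ℂ)‖) :
    contourIntegralAbs t s1 (fun z => ‖φ z‖) ≤ 100 * C₁ * (1 + Real.log t) := by
  have ht0 : 0 < t := by linarith
  have hpos := fun z (hz : z ∈ contourSet t s1) => norm_add_inv_pos_of_mem_contourSet ht0 hs0 hz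
  have hC₁ : 0 ≤ C₁ := by
    have hz₀ := arc_mem_contourSet ht0 hs0 (θ := 0)
      ⟨by linarith [Real.pi_pos], by linarith [Real.pi_pos]⟩
    have := (norm_nonneg _).trans (hb _ hz₀)
    rwa [le_div_iff₀ (hpos _ hz₀), zero_mul] at this
  have hcont : ContinuousOn (fun z => 1 / ‖z + ((t⁻¹ : ℝ) : ℂ)‖) (contourSet t s1) :=
    continuousOn_const.div (by fun_prop) fun z hz => (hpos z hz).ne'
  calc contourIntegralAbs t s1 (fun z => ‖φ z‖)
      ≤ contourIntegralAbs t s1 (fun z => C₁ * (1 / ‖z + ((t⁻¹ : ℝ) : ℂ)‖)) :=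
        contourIntegralAbs_mono ht0 hs0 hφ.norm (continuousOn_const.mul hcont) fun z hz => by
          rw [mul_one_div]; exact hb z hz
    _ = C₁ * contourIntegralAbs t s1 (fun z => 1 / ‖z + ((t⁻¹ : ℝ) : ℂ)‖) :=
        contourIntegralAbs_const_mul _ _
    _ ≤ C₁ * (100 * (1 + Real.log t)) :=
        mul_le_mul_of_nonneg_left (contourIntegralAbs_one_div_norm_le ht hs0 hs1) hC₁
    _ = 100 * C₁ * (1 + Real.log t) := by ring

end Contour

/-- there is an absolute constant `C > 1` such that, for every `t ≥ 1` and
every symmetric PSD `Σ = ∑ σ_j e_j e_jᵀ` with `σ₁ = ‖Σ‖_op ≤ 1`, writing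
`Σ_t := Σ + t⁻¹I`: (i) for every `z ∈ C_t`, `Σ − zI` is invertible and
`‖Σ_t^{1/2}(Σ − zI)⁻¹Σ_t^{1/2}‖_op ≤ C`; (ii) `∮_{C_t} |dz|/|z+t⁻¹| ≤ C(1+log t)`, hence
any `φ_t` holomorphic near `C_t` with `|φ_t(z)| ≤ C₁/|z+t⁻¹|` on `C_t` satisfies
`∮_{C_t}|φ_t(z)||dz| ≤ C·C₁·(1+log t)`; (iii) if in addition `Σ̂` is symmetric PSD with
`‖Σ_t^{−1/2}(Σ̂−Σ)Σ_t^{−1/2}‖_op ≤ □ < 1/9`, then for every `z ∈ C_t`, `Σ̂ − zI` is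
invertible and `‖Σ_t^{1/2}(Σ̂ − zI)⁻¹Σ_t^{1/2}‖_op ≤ C`. -/
theorem contour_resolvent_bounds :
    ∃ C : ℝ, 1 < C ∧
      ∀ (p : ℕ) (t : ℝ) (e : Fin p → Fin p → ℝ) (σv : Fin p → ℝ),
        1 ≤ t → ONFamily e → (∀ j, 0 ≤ σv j) →
        opNorm (specMat e σv) ≤ 1 →
        ((∀ z ∈ contourSet t (opNorm (specMat e σv)),
          IsUnit ((specMat e σv).map (fun x : ℝ => (x : ℂ)) - z • 1) ∧
          opNormC (((specMat e fun j => Real.sqrt (σv j + t⁻¹)).map fun x : ℝ => (x : ℂ)) *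
              ((specMat e σv).map (fun x : ℝ => (x : ℂ)) - z • 1)⁻¹ *
              ((specMat e fun j => Real.sqrt (σv j + t⁻¹)).map fun x : ℝ => (x : ℂ))) ≤ C) ∧
        (contourIntegralAbs t (opNorm (specMat e σv))
            (fun z => 1 / ‖z + ((t⁻¹ : ℝ) : ℂ)‖) ≤ C * (1 + Real.log t) ∧
          ∀ (C₁ : ℝ) (φ : ℂ → ℂ),
            (∃ U : Set ℂ, IsOpen U ∧ contourSet t (opNorm (specMat e σv)) ⊆ U ∧
              DifferentiableOn ℂ φ U) →
            (∀ z ∈ contourSet t (opNorm (specMat e σv)),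
              ‖φ z‖ ≤ C₁ / ‖z + ((t⁻¹ : ℝ) : ℂ)‖) →
            contourIntegralAbs t (opNorm (specMat e σv)) (fun z => ‖φ z‖) ≤
              C * C₁ * (1 + Real.log t)) ∧
        ∀ (Sigmahat : Matrix (Fin p) (Fin p) ℝ) (Box : ℝ),
          Sigmahat.PosSemidef → Box < 1 / 9 →
          opNorm ((specMat e fun j => (Real.sqrt (σv j + t⁻¹))⁻¹) *
              (Sigmahat - specMat e σv) *
              (specMat e fun j => (Real.sqrt (σv j + t⁻¹))⁻¹)) ≤ Box →
          ∀ z ∈ contourSet t (opNorm (specMat e σv)),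
            IsUnit (Sigmahat.map (fun x : ℝ => (x : ℂ)) - z • 1) ∧
            opNormC (((specMat e fun j => Real.sqrt (σv j + t⁻¹)).map fun x : ℝ => (x : ℂ)) *
                (Sigmahat.map (fun x : ℝ => (x : ℂ)) - z • 1)⁻¹ *
                ((specMat e fun j => Real.sqrt (σv j + t⁻¹)).map fun x : ℝ => (x : ℂ))) ≤ C) := by
  refine ⟨100, by norm_num, fun p t e σv ht he hσ hop => ?_⟩
  have ht0 : 0 < t := by linarith
  have hs0 := opNorm_nonneg (specMat e σv)
  have hw : ∀ j, 0 < σv j + t⁻¹ := fun j => by linarith [hσ j, inv_pos.mpr ht0]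
  have hdist : ∀ z ∈ contourSet t (opNorm (specMat e σv)), ∀ j,
      σv j + t⁻¹ ≤ 4 * ‖(σv j : ℂ) - z‖ := fun z hz j => by
    linarith [le_norm_sub_of_mem_contourSet ht0 (hσ j) (le_opNorm_specMat he σv j) hz]
  refine ⟨fun z hz => ?_, ⟨contourIntegralAbs_one_div_norm_le ht hs0 hop, ?_⟩, ?_⟩
  · refine (isUnit_and_opNormC_whitened_resolvent_le he hw (by norm_num) (hdist z hz) _
      (δ := 0) (by norm_num) ?_).imp_right fun h => by linarith
    rw [sub_self, mul_zero, zero_mul, opNorm_eq_norm, norm_zero]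
  · rintro C₁ φ ⟨U, -, hCU, hφ⟩ hb
    exact contourIntegralAbs_norm_le_of_le_div ht hs0 hop (hφ.continuousOn.mono hCU) hb
  · intro A Box _ hBox hA z hz
    have hBox0 : 0 ≤ Box := (opNorm_nonneg _).trans hA
    refine (isUnit_and_opNormC_whitened_resolvent_le he hw (by norm_num) (hdist z hz) A
      (by linarith) hA).imp_right fun h => h.trans ?_
    rw [div_le_iff₀ (by linarith)]
    linarith

end SpecFSD10
end

section
/- Let Σ, Σ̂ ∈ ℝ^{p×p} be symmetric positive semidefinite, t > 0, Σ_t := Σ + t⁻¹I_p, Σ̂_t := Σ̂ + t⁻¹I_p, and suppose ‖Σ_t^{−1/2}(Σ̂ − Σ)Σ_t^{−1/2}‖_op ≤ □ for some □ ≤ 1/2. Then ‖Σ_t^{−1/2}Σ̂_t^{1/2}‖_op² ≤ 1 + □ ≤ 2 and ‖Σ_t^{1/2}Σ̂_t^{−1/2}‖_op² ≤ 2. Consequently, for any orthogonal projection P commuting with Σ and satisfying PΣP ≼ Σ_t (in particular for P = P_{J} a spectral projection of Σ), ‖(PΣP)^{1/2}Σ̂_t^{−1/2}‖_op² ≤ 2.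 -/
/-!
With `E = Σ_t^{-1/2} (Σ̂ - Σ) Σ_t^{-1/2}` one has `Σ_t^{-1/2} Σ̂_t Σ_t^{-1/2} = 1 + E`, and
`‖E‖ ≤ □` gives `-□ ≤ E ≤ □`; conjugating back by `Σ_t^{1/2}` yields the Loewner bounds
`(1 - □) Σ_t ≼ Σ̂_t ≼ (1 + □) Σ_t`, hence also `P Σ P ≼ Σ_t ≼ 2 Σ̂_t`. Each norm in the statement is
`‖q z‖` with `z = s^{-1/2}` and `q² ≼ c s`, and the C⋆-identity gives
`‖q z‖² = ‖z q² z‖ ≤ ‖z (c s) z‖ = c`.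
-/

open Matrix

namespace SpecFSD11

noncomputable def l2norm {n : ℕ} (v : Fin n → ℝ) : ℝ := Real.sqrt (∑ i, v i ^ 2)

/-- The ℓ₂ → ℓ₂ operator norm of a real matrix. -/
noncomputable def opNorm {m n : ℕ} (A : Matrix (Fin m) (Fin n) ℝ) : ℝ :=
  sSup ((fun v => l2norm (A.mulVec v)) '' {v : Fin n → ℝ | l2norm v ≤ 1})

end SpecFSD11

lemma mul_mul_eq_one_of_mul_mul_self_eq_one {M : Type*} [Monoid M] {s x : M}
    (h₁ : s * (x * x) = 1) (h₂ : x * x * s = 1) : x * s * x = 1 := by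
  have hcomm : s * x = x * s :=
    calc s * x = s * x * (x * x * s) := by rw [h₂, mul_one]
      _ = s * (x * x) * (x * s) := by simp only [mul_assoc]
      _ = x * s := by rw [h₁, one_mul]
  rw [← hcomm, mul_assoc, h₁]

lemma isUnit_of_mul_mul_eq_one {M : Type*} [Monoid M] {s x : M} (h : x * s * x = 1) :
    IsUnit x :=
  isUnit_iff_exists_and_exists.mpr ⟨⟨s * x, by rw [← mul_assoc, h]⟩, ⟨x * s, h⟩⟩

lemma conjugate_smul_eq_algebraMap {A : Type*} [Ring A] [Algebra ℝ A] {s x : A}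
    (hxsx : x * s * x = 1) (c : ℝ) : x * (c • s) * x = algebraMap ℝ A c := by
  rw [mul_smul_comm, smul_mul_assoc, hxsx, Algebra.algebraMap_eq_smul_one]

lemma conjugate_eq_one_add_conjugate_sub {A : Type*} [Ring A] {s x : A} (hxsx : x * s * x = 1)
    (d : A) : x * d * x = 1 + x * (d - s) * x := by
  rw [mul_sub, sub_mul, hxsx]
  abel

section StarOrderedRing

variable {A : Type*} [Ring A] [StarRing A] [PartialOrder A] [StarOrderedRing A]

lemma IsUnit.conjugate_le_conjugate_iff {u a b : A} (hu : IsUnit u)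
    (hu_sa : IsSelfAdjoint u) : u * a * u ≤ u * b * u ↔ a ≤ b :=
  calc u * a * u ≤ u * b * u ↔ 0 ≤ star u * (b - a) * u := by
        rw [hu_sa.star_eq, mul_sub, sub_mul, sub_nonneg]
    _ ↔ a ≤ b := by rw [hu.star_left_conjugate_nonneg_iff, sub_nonneg]

variable [Algebra ℝ A]

lemma le_smul_iff_conjugate_le {s x : A} (hx : IsSelfAdjoint x) (hxsx : x * s * x = 1)
    (d : A) (c : ℝ) : d ≤ c • s ↔ x * d * x ≤ algebraMap ℝ A c := by
  rw [← conjugate_smul_eq_algebraMap hxsx,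
    (isUnit_of_mul_mul_eq_one hxsx).conjugate_le_conjugate_iff hx]

lemma smul_le_iff_le_conjugate {s x : A} (hx : IsSelfAdjoint x) (hxsx : x * s * x = 1)
    (d : A) (c : ℝ) : c • s ≤ d ↔ algebraMap ℝ A c ≤ x * d * x := by
  rw [← conjugate_smul_eq_algebraMap hxsx,
    (isUnit_of_mul_mul_eq_one hxsx).conjugate_le_conjugate_iff hx]

end StarOrderedRing

section IsometricCFC

variable {A : Type*} [NormedRing A] [StarRing A] [NormedAlgebra ℝ A] [PartialOrder A]
  [StarOrderedRing A] [IsometricContinuousFunctionalCalculus ℝ A IsSelfAdjoint]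

lemma IsSelfAdjoint.le_algebraMap_of_norm_le {a : A} {r : ℝ} (ha : IsSelfAdjoint a)
    (h : ‖a‖ ≤ r) : a ≤ algebraMap ℝ A r :=
  le_algebraMap_of_spectrum_le fun x hx => by
    have hx' := norm_apply_le_norm_cfc id a hx
    rw [cfc_id ℝ a] at hx'
    exact (Real.le_norm_self x).trans (hx'.trans h)

lemma IsSelfAdjoint.neg_algebraMap_le_of_norm_le {a : A} {r : ℝ} (ha : IsSelfAdjoint a)
    (h : ‖a‖ ≤ r) : -algebraMap ℝ A r ≤ a :=
  neg_le.mp <| ha.neg.le_algebraMap_of_norm_le (by rwa [norm_neg])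

lemma le_smul_of_norm_conjugate_sub_le {s x d : A} {r : ℝ} (hx : IsSelfAdjoint x)
    (hxsx : x * s * x = 1) (hE : IsSelfAdjoint (x * (d - s) * x)) (h : ‖x * (d - s) * x‖ ≤ r) :
    d ≤ (1 + r) • s := by
  rw [le_smul_iff_conjugate_le hx hxsx, conjugate_eq_one_add_conjugate_sub hxsx, map_add, map_one]
  exact add_le_add le_rfl (hE.le_algebraMap_of_norm_le h)

lemma smul_le_of_norm_conjugate_sub_le {s x d : A} {r : ℝ} (hx : IsSelfAdjoint x)
    (hxsx : x * s * x = 1) (hE : IsSelfAdjoint (x * (d - s) * x)) (h : ‖x * (d - s) * x‖ ≤ r) :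
    (1 - r) • s ≤ d := by
  rw [smul_le_iff_le_conjugate hx hxsx, conjugate_eq_one_add_conjugate_sub hxsx, map_sub, map_one,
    sub_eq_add_neg]
  exact add_le_add le_rfl (hE.neg_algebraMap_le_of_norm_le h)

variable [NonnegSpectrumClass ℝ A]

lemma norm_le_of_nonneg_of_le_algebraMap {a : A} {r : ℝ} (hr : 0 ≤ r) (ha : 0 ≤ a)
    (h : a ≤ algebraMap ℝ A r) : ‖a‖ ≤ r := by
  rw [← cfc_id ℝ a]
  refine norm_cfc_le hr fun x hx => ?_
  rw [id, Real.norm_of_nonneg (spectrum_nonneg_of_nonneg ha hx)]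
  exact (le_algebraMap_iff_spectrum_le (IsSelfAdjoint.of_nonneg ha)).mp h x hx

variable [CStarRing A]

lemma sq_norm_le_of_star_mul_self_le {a : A} {c : ℝ} (hc : 0 ≤ c)
    (h : star a * a ≤ algebraMap ℝ A c) : ‖a‖ ^ 2 ≤ c := by
  rw [sq, ← CStarRing.norm_star_mul_self]
  exact norm_le_of_nonneg_of_le_algebraMap hc (star_mul_self_nonneg a) h

lemma sq_norm_mul_le_of_mul_self_le {q s z : A} {c : ℝ} (hc : 0 ≤ c) (hq : IsSelfAdjoint q)
    (hz : IsSelfAdjoint z) (hzsz : z * s * z = 1) (h : q * q ≤ c • s) : ‖q * z‖ ^ 2 ≤ c := by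
  refine sq_norm_le_of_star_mul_self_le hc ?_
  rw [star_mul, hq.star_eq, hz.star_eq, mul_assoc, ← mul_assoc q, ← mul_assoc]
  exact (le_smul_iff_conjugate_le hz hzsz _ c).mp h

end IsometricCFC

namespace SpecFSD11

open scoped Matrix.Norms.L2Operator MatrixOrder

lemma l2norm_eq_norm {n : ℕ} (v : Fin n → ℝ) : l2norm v = ‖WithLp.toLp 2 v‖ := by
  simp [l2norm, EuclideanSpace.norm_eq]

lemma opNorm_eq_l2_opNorm {m n : ℕ} (A : Matrix (Fin m) (Fin n) ℝ) : opNorm A = ‖A‖ := by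
  rw [l2_opNorm_def, ← ContinuousLinearMap.sSup_unitClosedBall_eq_norm, opNorm]
  congr 1
  ext y
  constructor
  · rintro ⟨v, hv, rfl⟩
    refine ⟨WithLp.toLp 2 v, ?_, ?_⟩
    · simpa [l2norm_eq_norm] using hv
    · simp [l2norm_eq_norm]
  · rintro ⟨x, hx, rfl⟩
    refine ⟨x.ofLp, ?_, ?_⟩
    · simpa [l2norm_eq_norm] using hx
    · simp only [l2norm_eq_norm]; rfl

theorem change_of_norm_lemma_general {p : ℕ}
    (Sigma Sigmahat StH StIH ShtH ShtIH : Matrix (Fin p) (Fin p) ℝ)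
    (t Box : ℝ) (hBox' : Box ≤ 1 / 2)
    (hSigma : Sigma.PosSemidef) (hSigmahat : Sigmahat.PosSemidef)
    (hStH : StH.PosSemidef)
    (hStHsq : StH * StH = Sigma + t⁻¹ • (1 : Matrix (Fin p) (Fin p) ℝ))
    (hStIH : StIH.PosSemidef)
    (hStIHsq : (Sigma + t⁻¹ • (1 : Matrix (Fin p) (Fin p) ℝ)) * (StIH * StIH) = 1)
    (hShtH : ShtH.PosSemidef)
    (hShtHsq : ShtH * ShtH = Sigmahat + t⁻¹ • (1 : Matrix (Fin p) (Fin p) ℝ))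
    (hShtIH : ShtIH.PosSemidef)
    (hShtIHsq : (Sigmahat + t⁻¹ • (1 : Matrix (Fin p) (Fin p) ℝ)) * (ShtIH * ShtIH) = 1)
    (hevent : opNorm (StIH * (Sigmahat - Sigma) * StIH) ≤ Box) :
    (opNorm (StIH * ShtH) ^ 2 ≤ 1 + Box ∧ (1 : ℝ) + Box ≤ 2) ∧
    opNorm (StH * ShtIH) ^ 2 ≤ 2 ∧
    ∀ P Q : Matrix (Fin p) (Fin p) ℝ, P.IsSymm → P * P = P → P * Sigma = Sigma * P →
      ((Sigma + t⁻¹ • (1 : Matrix (Fin p) (Fin p) ℝ)) - P * Sigma * P).PosSemidef →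
      Q.PosSemidef → Q * Q = P * Sigma * P →
      opNorm (Q * ShtIH) ^ 2 ≤ 2 := by
  set St := Sigma + t⁻¹ • (1 : Matrix (Fin p) (Fin p) ℝ)
  set Sht := Sigmahat + t⁻¹ • (1 : Matrix (Fin p) (Fin p) ℝ)
  simp only [opNorm_eq_l2_opNorm] at hevent ⊢
  have hStIH_St : StIH * St * StIH = 1 :=
    mul_mul_eq_one_of_mul_mul_self_eq_one hStIHsq (mul_eq_one_comm.mp hStIHsq)
  have hShtIH_Sht : ShtIH * Sht * ShtIH = 1 :=
    mul_mul_eq_one_of_mul_mul_self_eq_one hShtIHsq (mul_eq_one_comm.mp hShtIHsq)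
  have hdiff : Sht - St = Sigmahat - Sigma := add_sub_add_right_eq_sub _ _ _
  have hE : IsSelfAdjoint (StIH * (Sht - St) * StIH) := by
    rw [hdiff]
    exact (hSigmahat.1.sub hSigma.1).isSelfAdjoint.conjugate_self hStIH.1
  rw [← hdiff] at hevent
  have hSht_le : Sht ≤ (1 + Box) • St :=
    le_smul_of_norm_conjugate_sub_le hStIH.1 hStIH_St hE hevent
  have hSt_le : St ≤ (2 : ℝ) • Sht :=
    calc St = (2 : ℝ) • (1 - 1 / 2 : ℝ) • St := by module
      _ ≤ (2 : ℝ) • Sht := smul_le_smul_of_nonneg_left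
          (smul_le_of_norm_conjugate_sub_le hStIH.1 hStIH_St hE (hevent.trans hBox')) zero_le_two
  refine ⟨⟨?_, by linarith⟩, ?_, fun P Q _ _ _ hPSP hQ hQsq => ?_⟩
  · rw [← norm_star, star_mul, hStIH.1.star_eq, hShtH.1.star_eq]
    exact sq_norm_mul_le_of_mul_self_le (by linarith [(norm_nonneg _).trans hevent]) hShtH.1
      hStIH.1 hStIH_St (hShtHsq ▸ hSht_le)
  · exact sq_norm_mul_le_of_mul_self_le zero_le_two hStH.1 hShtIH.1 hShtIH_Sht (hStHsq ▸ hSt_le)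
  · exact sq_norm_mul_le_of_mul_self_le zero_le_two hQ.1 hShtIH.1 hShtIH_Sht
      (hQsq ▸ (Matrix.le_iff.mpr hPSP).trans hSt_le)

/-- Let `Σ, Σ̂` be symmetric PSD, `t > 0`, `Σ_t := Σ + t⁻¹I`,
`Σ̂_t := Σ̂ + t⁻¹I`, and suppose `‖Σ_t^{−1/2}(Σ̂ − Σ)Σ_t^{−1/2}‖_op ≤ □ ≤ 1/2`. Then
`‖Σ_t^{−1/2}Σ̂_t^{1/2}‖_op² ≤ 1 + □ ≤ 2` and `‖Σ_t^{1/2}Σ̂_t^{−1/2}‖_op² ≤ 2`.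
Consequently, for any orthogonal projection `P` commuting with `Σ` and with
`PΣP ≼ Σ_t`, one has `‖(PΣP)^{1/2}Σ̂_t^{−1/2}‖_op² ≤ 2`.
The square roots are characterized: `StH² = Σ_t`, `StIH` is PSD with `Σ_t·StIH² = 1`,
`ShtH² = Σ̂_t`, `ShtIH` PSD with `Σ̂_t·ShtIH² = 1`, and `Q² = PΣP` with `Q` PSD. -/
theorem change_of_norm_lemma {p : ℕ}
    (Sigma Sigmahat StH StIH ShtH ShtIH : Matrix (Fin p) (Fin p) ℝ)
    (t Box : ℝ) (ht : 0 < t) (hBox : 0 ≤ Box) (hBox' : Box ≤ 1 / 2)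
    (hSigma : Sigma.PosSemidef) (hSigmahat : Sigmahat.PosSemidef)
    (hStH : StH.PosSemidef)
    (hStHsq : StH * StH = Sigma + t⁻¹ • (1 : Matrix (Fin p) (Fin p) ℝ))
    (hStIH : StIH.PosSemidef)
    (hStIHsq : (Sigma + t⁻¹ • (1 : Matrix (Fin p) (Fin p) ℝ)) * (StIH * StIH) = 1)
    (hShtH : ShtH.PosSemidef)
    (hShtHsq : ShtH * ShtH = Sigmahat + t⁻¹ • (1 : Matrix (Fin p) (Fin p) ℝ))
    (hShtIH : ShtIH.PosSemidef)
    (hShtIHsq : (Sigmahat + t⁻¹ • (1 : Matrix (Fin p) (Fin p) ℝ)) * (ShtIH * ShtIH) = 1)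
    (hevent : opNorm (StIH * (Sigmahat - Sigma) * StIH) ≤ Box) :
    (opNorm (StIH * ShtH) ^ 2 ≤ 1 + Box ∧ (1 : ℝ) + Box ≤ 2) ∧
    opNorm (StH * ShtIH) ^ 2 ≤ 2 ∧
    ∀ P Q : Matrix (Fin p) (Fin p) ℝ, P.IsSymm → P * P = P → P * Sigma = Sigma * P →
      ((Sigma + t⁻¹ • (1 : Matrix (Fin p) (Fin p) ℝ)) - P * Sigma * P).PosSemidef →
      Q.PosSemidef → Q * Q = P * Sigma * P →
      opNorm (Q * ShtIH) ^ 2 ≤ 2 :=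
  change_of_norm_lemma_general Sigma Sigmahat StH StIH ShtH ShtIH t Box hBox' hSigma hSigmahat hStH
    hStHsq hStIH hStIHsq hShtH hShtHsq hShtIH hShtIHsq hevent

end SpecFSD11
end

section
/- Let Σ, Σ̂ ∈ ℝ^{p×p} be symmetric positive semidefinite with eigenvalues σ₁ ≥ … ≥ σ_p and σ̂₁ ≥ … ≥ σ̂_p arranged in nonincreasing order, let t > 0, □ > 0, and suppose ‖Σ_t^{−1/2}(Σ̂ − Σ)Σ_t^{−1/2}‖_op ≤ □ where Σ_t := Σ + t⁻¹I_p. Then for every k ∈ {1,…,p}: σ̂_k ≥ σ_k − □·(σ_k + t⁻¹) and σ̂_k ≤ σ_k + □·(σ_k + t⁻¹). (In particular, with J* = {1,…,k*} the top-k* eigenspace of Σ, one has σ̂_{k*} ≥ σ_{k*} − □(σ_{k*} + t⁻¹) and σ̂_{k*+1} ≤ σ_{k*+1} + □(σ_{k*+1} + t⁻¹).) -/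
open Matrix

namespace SpecFSD17

noncomputable def l2norm {n : ℕ} (v : Fin n → ℝ) : ℝ := Real.sqrt (∑ i, v i ^ 2)

/-- The ℓ₂ → ℓ₂ operator norm of a real matrix. -/
noncomputable def opNorm {m n : ℕ} (A : Matrix (Fin m) (Fin n) ℝ) : ℝ :=
  sSup ((fun v => l2norm (A.mulVec v)) '' {v : Fin n → ℝ | l2norm v ≤ 1})

def ONFamily {p : ℕ} (e : Fin p → Fin p → ℝ) : Prop :=
  (∀ j, ∑ i, e j i * e j i = 1) ∧ ∀ j k, j ≠ k → ∑ i, e j i * e k i = 0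

noncomputable def specMat {p : ℕ} (e : Fin p → Fin p → ℝ) (c : Fin p → ℝ) :
    Matrix (Fin p) (Fin p) ℝ :=
  ∑ j, c j • Matrix.vecMulVec (e j) (e j)

lemma l2norm_nonneg {n : ℕ} (v : Fin n → ℝ) : 0 ≤ l2norm v := Real.sqrt_nonneg _

lemma l2norm_sq {n : ℕ} (v : Fin n → ℝ) : l2norm v ^ 2 = ∑ i, v i ^ 2 :=
  Real.sq_sqrt (Finset.sum_nonneg fun i _ => sq_nonneg _)

lemma l2norm_smul {n : ℕ} (c : ℝ) (v : Fin n → ℝ) : l2norm (c • v) = |c| * l2norm v := by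
  unfold l2norm
  rw [← Real.sqrt_sq_eq_abs, ← Real.sqrt_mul (sq_nonneg c), Finset.mul_sum]
  congr 1
  exact Finset.sum_congr rfl fun i _ => by rw [Pi.smul_apply, smul_eq_mul, mul_pow]

lemma dot_abs_le {n : ℕ} (x y : Fin n → ℝ) : |x ⬝ᵥ y| ≤ l2norm x * l2norm y := by
  have h := Finset.sum_mul_sq_le_sq_mul_sq Finset.univ x y
  have := abs_le_abs (le_of_eq (rfl : (x ⬝ᵥ y) = ∑ i, x i * y i))
  rw [← Real.sqrt_sq_eq_abs]
  unfold l2norm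
  rw [← Real.sqrt_mul (Finset.sum_nonneg fun i _ => sq_nonneg _)]
  exact Real.sqrt_le_sqrt h

lemma l2norm_eq_zero {n : ℕ} {v : Fin n → ℝ} (h : l2norm v = 0) : v = 0 := by
  have h2 : ∑ i, v i ^ 2 = 0 := by
    have := l2norm_sq v; rw [h] at this; simpa using this.symm
  funext i
  have := (Finset.sum_eq_zero_iff_of_nonneg (fun i _ => sq_nonneg (v i))).mp h2 i (Finset.mem_univ i)
  exact pow_eq_zero_iff (by norm_num) |>.mp this


lemma opNorm_bddAbove {m n : ℕ} (A : Matrix (Fin m) (Fin n) ℝ) :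
    BddAbove ((fun v => l2norm (A.mulVec v)) '' {v : Fin n → ℝ | l2norm v ≤ 1}) := by
  refine ⟨Real.sqrt (∑ i, ∑ j, A i j ^ 2), ?_⟩
  rintro y ⟨v, hv, rfl⟩
  have hv1 : ∑ j, v j ^ 2 ≤ 1 := by
    have h2 := l2norm_sq v
    have hv' : l2norm v ≤ 1 := hv
    nlinarith [l2norm_nonneg v]
  unfold l2norm
  apply Real.sqrt_le_sqrt
  apply Finset.sum_le_sum
  intro i _
  have hcs := Finset.sum_mul_sq_le_sq_mul_sq Finset.univ (A i) v
  have : A.mulVec v i = ∑ j, A i j * v j := rfl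
  rw [this]
  calc (∑ j, A i j * v j) ^ 2 ≤ (∑ j, A i j ^ 2) * ∑ j, v j ^ 2 := hcs
    _ ≤ (∑ j, A i j ^ 2) * 1 := by
        apply mul_le_mul_of_nonneg_left hv1 (Finset.sum_nonneg fun j _ => sq_nonneg _)
    _ = _ := mul_one _

lemma opNorm_bound {n : ℕ} {A : Matrix (Fin n) (Fin n) ℝ} {B : ℝ} (hA : opNorm A ≤ B) :
    ∀ v, l2norm (A.mulVec v) ≤ B * l2norm v := by
  intro v
  by_cases h0 : l2norm v = 0
  · rw [l2norm_eq_zero h0] at *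
    simp [h0, l2norm, Real.sqrt_eq_zero']
  · have hpos : 0 < l2norm v := lt_of_le_of_ne (l2norm_nonneg v) (Ne.symm h0)
    have hmem : ((l2norm v)⁻¹ • v) ∈ {v : Fin n → ℝ | l2norm v ≤ 1} := by
      simp only [Set.mem_setOf_eq, l2norm_smul, abs_of_pos (inv_pos.mpr hpos)]
      rw [inv_mul_cancel₀ h0]
    have hle : l2norm (A.mulVec ((l2norm v)⁻¹ • v)) ≤ opNorm A :=
      le_csSup (opNorm_bddAbove A) ⟨_, hmem, rfl⟩
    rw [Matrix.mulVec_smul, l2norm_smul, abs_of_pos (inv_pos.mpr hpos)] at hle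
    have := le_trans hle hA
    calc l2norm (A.mulVec v) = l2norm v * ((l2norm v)⁻¹ * l2norm (A.mulVec v)) := by
          field_simp
      _ ≤ l2norm v * B := mul_le_mul_of_nonneg_left this hpos.le
      _ = B * l2norm v := mul_comm _ _


lemma ON_col {p : ℕ} {a : Fin p → Fin p → ℝ} (ha : ONFamily a) (i x : Fin p) :
    ∑ j, a j i * a j x = if i = x then 1 else 0 := by
  have h1 : (Matrix.of a) * (Matrix.of a)ᵀ = 1 := by
    ext j k
    rw [Matrix.mul_apply, Matrix.one_apply]
    simp only [Matrix.transpose_apply, Matrix.of_apply]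
    by_cases h : j = k
    · subst h; simp [ha.1 j]
    · simp [h, ha.2 j k h]
  have h2 : (Matrix.of a)ᵀ * (Matrix.of a) = 1 := mul_eq_one_comm.mp h1
  have := congrFun (congrFun h2 i) x
  rw [Matrix.mul_apply, Matrix.one_apply] at this
  simpa using this

lemma specMat_apply {p : ℕ} (a : Fin p → Fin p → ℝ) (c : Fin p → ℝ) (i x : Fin p) :
    specMat a c i x = ∑ j, c j * (a j i * a j x) := by
  simp [specMat, Matrix.sum_apply, Matrix.vecMulVec_apply]

lemma specMat_eq {p : ℕ} (a : Fin p → Fin p → ℝ) (c : Fin p → ℝ) :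
    specMat a c = (Matrix.of a)ᵀ * (Matrix.diagonal c * Matrix.of a) := by
  ext i x
  rw [specMat_apply, Matrix.mul_apply]
  refine Finset.sum_congr rfl fun j _ => ?_
  rw [Matrix.mul_apply, Matrix.transpose_apply]
  simp [Matrix.diagonal_apply, Finset.mul_sum]
  ring

lemma specMat_mul {p : ℕ} {a : Fin p → Fin p → ℝ} (ha : ONFamily a) (c d : Fin p → ℝ) :
    specMat a c * specMat a d = specMat a (fun j => c j * d j) := by
  have h1 : (Matrix.of a) * (Matrix.of a)ᵀ = 1 := by
    ext j k
    rw [Matrix.mul_apply, Matrix.one_apply]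
    simp only [Matrix.transpose_apply, Matrix.of_apply]
    by_cases h : j = k
    · subst h; simp [ha.1 j]
    · simp [h, ha.2 j k h]
  rw [specMat_eq, specMat_eq, specMat_eq]
  simp only [Matrix.mul_assoc]
  rw [← Matrix.mul_assoc (Matrix.of a) ((Matrix.of a)ᵀ), h1, Matrix.one_mul,
    ← Matrix.mul_assoc (Matrix.diagonal c) (Matrix.diagonal d), Matrix.diagonal_mul_diagonal]

lemma specMat_one {p : ℕ} {a : Fin p → Fin p → ℝ} (ha : ONFamily a) :
    specMat a (fun _ => (1:ℝ)) = 1 := by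
  have h1 : (Matrix.of a) * (Matrix.of a)ᵀ = 1 := by
    ext j k
    rw [Matrix.mul_apply, Matrix.one_apply]
    simp only [Matrix.transpose_apply, Matrix.of_apply]
    by_cases h : j = k
    · subst h; simp [ha.1 j]
    · simp [h, ha.2 j k h]
  rw [specMat_eq]
  rw [show Matrix.diagonal (fun _ => (1:ℝ)) = 1 from Matrix.diagonal_one, Matrix.one_mul]
  exact mul_eq_one_comm.mp h1

lemma tripleswap {p : ℕ} (f : Fin p → Fin p → Fin p → ℝ) :
    ∑ i, ∑ x, ∑ j, f j i x = ∑ j, ∑ i, ∑ x, f j i x := by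
  rw [show (∑ i, ∑ x, ∑ j, f j i x) = ∑ i, ∑ j, ∑ x, f j i x from
    Finset.sum_congr rfl fun i _ => Finset.sum_comm, Finset.sum_comm]

lemma quadform {p : ℕ} (a : Fin p → Fin p → ℝ) (c : Fin p → ℝ) (w : Fin p → ℝ) :
    ((specMat a c).mulVec w) ⬝ᵥ w = ∑ j, c j * (a j ⬝ᵥ w) ^ 2 := by
  have L : ((specMat a c).mulVec w) ⬝ᵥ w
      = ∑ i, ∑ x, ∑ j, c j * (a j i * a j x) * (w x * w i) := by
    simp only [dotProduct, Matrix.mulVec, dotProduct, specMat_apply, Finset.sum_mul]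
    exact Finset.sum_congr rfl fun i _ => Finset.sum_congr rfl fun x _ =>
      Finset.sum_congr rfl fun j _ => by ring
  have R : ∀ j, c j * (a j ⬝ᵥ w) ^ 2 = ∑ i, ∑ x, c j * (a j i * a j x) * (w x * w i) := by
    intro j
    rw [sq, dotProduct, Finset.sum_mul_sum, Finset.mul_sum]
    exact Finset.sum_congr rfl fun i _ => by
      rw [Finset.mul_sum]; exact Finset.sum_congr rfl fun x _ => by ring
  rw [L, tripleswap]
  exact Finset.sum_congr rfl fun j _ => (R j).symm

lemma parseval {p : ℕ} {a : Fin p → Fin p → ℝ} (ha : ONFamily a) (w : Fin p → ℝ) :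
    ∑ j, (a j ⬝ᵥ w) ^ 2 = ∑ i, w i ^ 2 := by
  have := quadform a (fun _ => (1:ℝ)) w
  rw [specMat_one ha, Matrix.one_mulVec] at this
  simp only [one_mul] at this
  rw [← this]
  simp [dotProduct, sq]


lemma dot_comb {p : ℕ} (v : Fin p → ℝ) (x : Fin p → ℝ) (a : Fin p → Fin p → ℝ) :
    (v ⬝ᵥ fun i => ∑ l, x l * a l i) = ∑ l, x l * (v ⬝ᵥ a l) := by
  simp only [dotProduct, Finset.mul_sum]
  rw [Finset.sum_comm]
  exact Finset.sum_congr rfl fun l _ => Finset.sum_congr rfl fun i _ => by ring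

lemma dot_delta {p : ℕ} {a : Fin p → Fin p → ℝ} (ha : ONFamily a) (j l : Fin p) :
    a j ⬝ᵥ a l = if j = l then 1 else 0 := by
  by_cases h : j = l
  · subst h; simp [dotProduct, ha.1 j]
  · simp [dotProduct, h, ha.2 j l h]

lemma coeff {p : ℕ} {a : Fin p → Fin p → ℝ} (ha : ONFamily a) (x : Fin p → ℝ) (j : Fin p) :
    (a j ⬝ᵥ fun i => ∑ l, x l * a l i) = x j := by
  rw [dot_comb]
  rw [Finset.sum_eq_single j]
  · rw [dot_delta ha]; simp
  · intro l _ hl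
    rw [dot_delta ha j l, if_neg (fun h => hl h.symm), mul_zero]
  · simp

lemma exists_test {p : ℕ} {a : Fin p → Fin p → ℝ} (b : Fin p → Fin p → ℝ)
    (ha : ONFamily a) (k : Fin p) :
    ∃ w : Fin p → ℝ, (∑ i, w i ^ 2 = 1) ∧ (∀ j, k < j → a j ⬝ᵥ w = 0) ∧
      (∀ j, j < k → b j ⬝ᵥ w = 0) := by
  classical
  set C : Matrix (Fin p) (Fin p) ℝ :=
    Matrix.of fun j l => if j < k then b j ⬝ᵥ a l else if j = k then 0 else
      (if j = l then 1 else 0) with hC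
  have hkrow : ∀ x, C.mulVec x k = 0 := by
    intro x
    simp only [Matrix.mulVec, dotProduct, hC, Matrix.of_apply, lt_irrefl, if_false, if_true,
      if_neg (lt_irrefl k), if_pos rfl, zero_mul]
    simp
  have hni : ¬ Function.Injective (Matrix.mulVecLin C) := by
    intro hinj
    have hsurj := LinearMap.injective_iff_surjective.mp hinj
    obtain ⟨x, hx⟩ := hsurj (Pi.single k 1)
    have := congrFun hx k
    rw [show (Matrix.mulVecLin C) x = C.mulVec x from rfl] at this
    rw [hkrow x] at this
    simp at this
  obtain ⟨x, hxker, hxne⟩ := by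
    rw [← LinearMap.ker_eq_bot] at hni
    exact Submodule.exists_mem_ne_zero_of_ne_bot hni
  have hFx : C.mulVec x = 0 := hxker
  -- the unnormalized vector
  set w0 : Fin p → ℝ := fun i => ∑ l, x l * a l i with hw0
  have haw0 : ∀ j, a j ⬝ᵥ w0 = x j := fun j => coeff ha x j
  have hbw0 : ∀ j, j < k → b j ⬝ᵥ w0 = 0 := by
    intro j hj
    have := congrFun hFx j
    simp only [Matrix.mulVec, dotProduct, hC, Matrix.of_apply, if_pos hj, Pi.zero_apply] at this
    rw [hw0, dot_comb]
    rw [← this]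
    exact Finset.sum_congr rfl fun l _ => by simp only [dotProduct]; ring
  have hxhigh : ∀ j, k < j → x j = 0 := by
    intro j hj
    have := congrFun hFx j
    simp only [Matrix.mulVec, dotProduct, hC, Matrix.of_apply, if_neg (not_lt_of_gt hj),
      if_neg (ne_of_gt hj), Pi.zero_apply, ite_mul, one_mul, zero_mul] at this
    rwa [Finset.sum_ite_eq Finset.univ j x, if_pos (Finset.mem_univ j)] at this
  have hsum : ∑ i, w0 i ^ 2 = ∑ l, x l ^ 2 := by
    rw [← parseval ha w0]
    exact Finset.sum_congr rfl fun j _ => by rw [haw0 j]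
  have hs_pos : 0 < ∑ l, x l ^ 2 := by
    rcases Function.ne_iff.mp hxne with ⟨i, hi⟩
    have : (0:ℝ) < x i ^ 2 := lt_of_le_of_ne (sq_nonneg _) (Ne.symm (pow_ne_zero 2 hi))
    exact lt_of_lt_of_le this (Finset.single_le_sum (fun l _ => sq_nonneg (x l))
      (Finset.mem_univ i))
  set s := ∑ l, x l ^ 2 with hs
  refine ⟨(Real.sqrt s)⁻¹ • w0, ?_, ?_, ?_⟩
  · have : ∑ i, ((Real.sqrt s)⁻¹ • w0) i ^ 2 = ((Real.sqrt s)⁻¹)^2 * ∑ i, w0 i ^ 2 := by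
      rw [Finset.mul_sum]
      exact Finset.sum_congr rfl fun i _ => by
        rw [Pi.smul_apply, smul_eq_mul, mul_pow]
    rw [this, hsum, inv_pow, Real.sq_sqrt hs_pos.le]
    exact inv_mul_cancel₀ (ne_of_gt hs_pos)
  · intro j hj
    rw [dotProduct_smul, haw0 j, hxhigh j hj, smul_zero]
  · intro j hj
    rw [dotProduct_smul, hbw0 j hj, smul_zero]


lemma quad_lower {p : ℕ} {a : Fin p → Fin p → ℝ} (ha : ONFamily a) {c : Fin p → ℝ}
    (hmono : ∀ j k : Fin p, j ≤ k → c k ≤ c j) {w : Fin p → ℝ} (hw : ∑ i, w i ^ 2 = 1)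
    (k : Fin p) (h0 : ∀ j, k < j → a j ⬝ᵥ w = 0) :
    c k ≤ ((specMat a c).mulVec w) ⬝ᵥ w := by
  rw [quadform]
  have h1 : ∑ j, c k * (a j ⬝ᵥ w) ^ 2 = c k := by
    rw [← Finset.mul_sum, parseval ha w, hw, mul_one]
  rw [← h1]
  apply Finset.sum_le_sum
  intro j _
  rcases le_or_gt j k with h | h
  · exact mul_le_mul_of_nonneg_right (hmono j k h) (sq_nonneg _)
  · rw [h0 j h]; simp

lemma quad_upper {p : ℕ} {a : Fin p → Fin p → ℝ} (ha : ONFamily a) {c : Fin p → ℝ}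
    (hmono : ∀ j k : Fin p, j ≤ k → c k ≤ c j) {w : Fin p → ℝ} (hw : ∑ i, w i ^ 2 = 1)
    (k : Fin p) (h0 : ∀ j, j < k → a j ⬝ᵥ w = 0) :
    ((specMat a c).mulVec w) ⬝ᵥ w ≤ c k := by
  rw [quadform]
  have h1 : ∑ j, c k * (a j ⬝ᵥ w) ^ 2 = c k := by
    rw [← Finset.mul_sum, parseval ha w, hw, mul_one]
  rw [← h1]
  apply Finset.sum_le_sum
  intro j _
  rcases lt_or_ge j k with h | h
  · rw [h0 j h]; simp
  · exact mul_le_mul_of_nonneg_right (hmono k j h) (sq_nonneg _)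

lemma quad_nonneg {p : ℕ} (a : Fin p → Fin p → ℝ) {c : Fin p → ℝ} (hc : ∀ j, 0 ≤ c j)
    (w : Fin p → ℝ) : 0 ≤ ((specMat a c).mulVec w) ⬝ᵥ w := by
  rw [quadform]
  exact Finset.sum_nonneg fun j _ => mul_nonneg (hc j) (sq_nonneg _)

lemma specMat_symm {p : ℕ} (a : Fin p → Fin p → ℝ) (c : Fin p → ℝ) :
    (specMat a c)ᵀ = specMat a c := by
  ext i x
  rw [Matrix.transpose_apply, specMat_apply, specMat_apply]
  exact Finset.sum_congr rfl fun j _ => by ring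


/-- Let `Σ = ∑ σ_j e_j e_jᵀ` and `Σ̂ = ∑ σ̂_j u_j u_jᵀ` be symmetric PSD,
with eigenvalues `σ` and `σ̂` arranged in nonincreasing order, let `t > 0`, `□ > 0`, and
suppose `‖Σ_t^{−1/2}(Σ̂ − Σ)Σ_t^{−1/2}‖_op ≤ □` where `Σ_t := Σ + t⁻¹I`
(`Σ_t^{−1/2} = ∑ (σ_j + t⁻¹)^{−1/2} e_j e_jᵀ`). Then for every `k`:
`σ̂_k ≥ σ_k − □(σ_k + t⁻¹)` and `σ̂_k ≤ σ_k + □(σ_k + t⁻¹)`. -/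
theorem eigenvalue_perturbation {p : ℕ}
    (e u : Fin p → Fin p → ℝ) (σv σhatv : Fin p → ℝ) (t Box : ℝ)
    (he : ONFamily e) (hu : ONFamily u)
    (hσpos : ∀ j, 0 ≤ σv j) (hσhatpos : ∀ j, 0 ≤ σhatv j)
    (hσmono : ∀ j k : Fin p, j ≤ k → σv k ≤ σv j)
    (hσhatmono : ∀ j k : Fin p, j ≤ k → σhatv k ≤ σhatv j)
    (ht : 0 < t) (hBox : 0 < Box)
    (hevent : opNorm ((specMat e fun j => (Real.sqrt (σv j + t⁻¹))⁻¹) *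
        (specMat u σhatv - specMat e σv) *
        (specMat e fun j => (Real.sqrt (σv j + t⁻¹))⁻¹)) ≤ Box) :
    ∀ k : Fin p,
      σv k - Box * (σv k + t⁻¹) ≤ σhatv k ∧ σhatv k ≤ σv k + Box * (σv k + t⁻¹) := by
  intro k
  have htinv : 0 < t⁻¹ := inv_pos.mpr ht
  have hst : ∀ j, 0 < σv j + t⁻¹ := fun j => add_pos_of_nonneg_of_pos (hσpos j) htinv
  set R : Matrix (Fin p) (Fin p) ℝ := specMat e fun j => (Real.sqrt (σv j + t⁻¹))⁻¹ with hR
  set P : Matrix (Fin p) (Fin p) ℝ := specMat e fun j => Real.sqrt (σv j + t⁻¹) with hP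
  set S : Matrix (Fin p) (Fin p) ℝ := specMat e σv with hS
  set Sh : Matrix (Fin p) (Fin p) ℝ := specMat u σhatv with hSh
  have hPR : P * R = 1 := by
    rw [hP, hR, specMat_mul he]
    rw [show (fun j => Real.sqrt (σv j + t⁻¹) * (Real.sqrt (σv j + t⁻¹))⁻¹) = fun _ => (1:ℝ) from
      funext fun j => mul_inv_cancel₀ (ne_of_gt (Real.sqrt_pos.mpr (hst j)))]
    exact specMat_one he
  have hRP : R * P = 1 := by
    rw [hR, hP, specMat_mul he]
    rw [show (fun j => (Real.sqrt (σv j + t⁻¹))⁻¹ * Real.sqrt (σv j + t⁻¹)) = fun _ => (1:ℝ) from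
      funext fun j => inv_mul_cancel₀ (ne_of_gt (Real.sqrt_pos.mpr (hst j)))]
    exact specMat_one he
  have hPP : P * P = specMat e (fun j => σv j + t⁻¹) := by
    rw [hP, specMat_mul he]
    rw [show (fun j => Real.sqrt (σv j + t⁻¹) * Real.sqrt (σv j + t⁻¹)) = fun j => σv j + t⁻¹ from
      funext fun j => Real.mul_self_sqrt (hst j).le]
  have hPsymm : Pᵀ = P := by rw [hP]; exact specMat_symm e _
  -- Step A : quadratic form bound
  have stepA : ∀ w : Fin p → ℝ,
      |((Sh - S).mulVec w) ⬝ᵥ w| ≤ Box * ((S.mulVec w) ⬝ᵥ w + t⁻¹ * (w ⬝ᵥ w)) := by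
    intro w
    set M : Matrix (Fin p) (Fin p) ℝ := R * (Sh - S) * R with hM
    set v : Fin p → ℝ := P.mulVec w with hv
    have hPMP : P * ((R * (Sh - S) * R) * P) = Sh - S := by
      calc P * ((R * (Sh - S) * R) * P)
          = P * (R * ((Sh - S) * (R * P))) := by simp only [Matrix.mul_assoc]
        _ = P * (R * (Sh - S)) := by rw [hRP, Matrix.mul_one]
        _ = (P * R) * (Sh - S) := by rw [Matrix.mul_assoc]
        _ = Sh - S := by rw [hPR, Matrix.one_mul]
    have key1 : (M.mulVec v) ⬝ᵥ v = ((Sh - S).mulVec w) ⬝ᵥ w := by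
      rw [hv, Matrix.mulVec_mulVec, Matrix.dotProduct_mulVec,
        ← Matrix.mulVec_transpose, hPsymm, Matrix.mulVec_mulVec, hM, hPMP]
    have key2 : v ⬝ᵥ v = (S.mulVec w) ⬝ᵥ w + t⁻¹ * (w ⬝ᵥ w) := by
      rw [hv, Matrix.dotProduct_mulVec, ← Matrix.mulVec_transpose, hPsymm,
        Matrix.mulVec_mulVec, hPP]
      have hsplit : specMat e (fun j => σv j + t⁻¹)
          = S + t⁻¹ • (1 : Matrix (Fin p) (Fin p) ℝ) := by
        rw [hS, ← specMat_one he]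
        unfold specMat
        rw [Finset.smul_sum, ← Finset.sum_add_distrib]
        exact Finset.sum_congr rfl fun j _ => by simp [smul_smul, ← add_smul]
      rw [hsplit, Matrix.add_mulVec, Matrix.smul_mulVec, Matrix.one_mulVec,
        add_dotProduct, smul_dotProduct]
      simp [smul_eq_mul]
    have key3 : |(M.mulVec v) ⬝ᵥ v| ≤ Box * (v ⬝ᵥ v) := by
      have h1 := dot_abs_le (M.mulVec v) v
      have h2 := opNorm_bound hevent v
      have hvv : l2norm v * l2norm v = v ⬝ᵥ v := by
        rw [← sq, l2norm_sq]
        simp [dotProduct, sq]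
      calc |(M.mulVec v) ⬝ᵥ v| ≤ l2norm (M.mulVec v) * l2norm v := h1
        _ ≤ (Box * l2norm v) * l2norm v :=
            mul_le_mul_of_nonneg_right h2 (l2norm_nonneg v)
        _ = Box * (l2norm v * l2norm v) := by ring
        _ = Box * (v ⬝ᵥ v) := by rw [hvv]
    rw [← key1, ← key2]
    exact key3
  constructor
  · rcases le_or_gt 1 Box with hb1 | hb1
    · have h1 : σv k + t⁻¹ ≤ Box * (σv k + t⁻¹) := le_mul_of_one_le_left (hst k).le hb1
      nlinarith [hσhatpos k, hst k]
    · obtain ⟨w, hw1, hwa, hwb⟩ := exists_test u he k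
      have hq : σv k ≤ (S.mulVec w) ⬝ᵥ w := quad_lower he hσmono hw1 k hwa
      have hqh : (Sh.mulVec w) ⬝ᵥ w ≤ σhatv k := quad_upper hu hσhatmono hw1 k hwb
      have hA := stepA w
      have hww : w ⬝ᵥ w = 1 := by
        have h : w ⬝ᵥ w = ∑ i, w i ^ 2 := by simp [dotProduct, sq]
        rw [h, hw1]
      have hsub : ((Sh - S).mulVec w) ⬝ᵥ w = (Sh.mulVec w) ⬝ᵥ w - (S.mulVec w) ⬝ᵥ w := by
        rw [Matrix.sub_mulVec, sub_dotProduct]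
      rw [hsub, hww, mul_one] at hA
      have hA' := abs_le.mp hA
      nlinarith [hA'.1, hqh, hq, mul_nonneg (sub_nonneg.mpr hb1.le) (sub_nonneg.mpr hq)]
  · obtain ⟨w, hw1, hwa, hwb⟩ := exists_test e hu k
    have hqh : σhatv k ≤ (Sh.mulVec w) ⬝ᵥ w := quad_lower hu hσhatmono hw1 k hwa
    have hq : (S.mulVec w) ⬝ᵥ w ≤ σv k := quad_upper he hσmono hw1 k hwb
    have hA := stepA w
    have hww : w ⬝ᵥ w = 1 := by
      have h : w ⬝ᵥ w = ∑ i, w i ^ 2 := by simp [dotProduct, sq]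
      rw [h, hw1]
    have hsub : ((Sh - S).mulVec w) ⬝ᵥ w = (Sh.mulVec w) ⬝ᵥ w - (S.mulVec w) ⬝ᵥ w := by
      rw [Matrix.sub_mulVec, sub_dotProduct]
    rw [hsub, hww, mul_one] at hA
    have hA' := abs_le.mp hA
    nlinarith [hA'.2, hqh, hq, mul_nonneg hBox.le (sub_nonneg.mpr hq)]


end SpecFSD17
end

section
/- Let Σ ∈ ℝ^{p×p} be symmetric positive definite with all eigenvalues in (0,1], let s ≥ 1, t ≥ 1, and β ∈ ℝ^p. Then ‖Σ^{1/2}·exp(−tΣ)·β‖₂² ≤ (s/(2e))^s · t^{−s} · ‖Σ^{(1−s)/2}β‖₂², where Σ^{(1−s)/2} and exp(−tΣ) are defined by applying the functions x ↦ x^{(1−s)/2} and x ↦ exp(−tx) to the eigenvalues of Σ. -/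
open Matrix

namespace SpecFSD18

noncomputable def l2norm {n : ℕ} (v : Fin n → ℝ) : ℝ := Real.sqrt (∑ i, v i ^ 2)

def ONFamily {p : ℕ} (e : Fin p → Fin p → ℝ) : Prop :=
  (∀ j, ∑ i, e j i * e j i = 1) ∧ ∀ j k, j ≠ k → ∑ i, e j i * e k i = 0

noncomputable def specMat {p : ℕ} (e : Fin p → Fin p → ℝ) (c : Fin p → ℝ) :
    Matrix (Fin p) (Fin p) ℝ :=
  ∑ j, c j • Matrix.vecMulVec (e j) (e j)

lemma mulVec_specMat {p : ℕ} (e : Fin p → Fin p → ℝ) (c v : Fin p → ℝ) :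
    (specMat e c).mulVec v = fun i => ∑ j, (c j * ∑ k, e j k * v k) * e j i := by
  funext i
  simp only [specMat, Matrix.mulVec, dotProduct, Matrix.sum_apply, Matrix.smul_apply,
    Matrix.vecMulVec_apply, smul_eq_mul, Finset.sum_mul, Finset.mul_sum]
  rw [Finset.sum_comm]
  exact Finset.sum_congr rfl fun j _ => Finset.sum_congr rfl fun k _ => by ring

lemma inner_combo {p : ℕ} {e : Fin p → Fin p → ℝ} (he : ONFamily e) (d : Fin p → ℝ) (j : Fin p) :
    ∑ k, e j k * (∑ l, d l * e l k) = d j := by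
  have : ∀ k, e j k * (∑ l, d l * e l k) = ∑ l, d l * (e j k * e l k) := by
    intro k
    rw [Finset.mul_sum]
    exact Finset.sum_congr rfl fun l _ => by ring
  simp only [this]
  rw [Finset.sum_comm]
  have : ∀ l, ∑ k, d l * (e j k * e l k) = d l * ∑ k, e j k * e l k := by
    intro l; rw [Finset.mul_sum]
  simp only [this]
  rw [Finset.sum_eq_single j]
  · rw [he.1 j, mul_one]
  · intro l _ hl
    rw [he.2 j l (Ne.symm hl), mul_zero]
  · intro h; exact absurd (Finset.mem_univ j) h

lemma l2norm_sq_combo {p : ℕ} {e : Fin p → Fin p → ℝ} (he : ONFamily e) (d : Fin p → ℝ) :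
    l2norm (fun i => ∑ j, d j * e j i) ^ 2 = ∑ j, d j ^ 2 := by
  have hnn : (0:ℝ) ≤ ∑ i, (∑ j, d j * e j i) ^ 2 :=
    Finset.sum_nonneg fun _ _ => sq_nonneg _
  rw [l2norm, Real.sq_sqrt hnn]
  have hexp : ∀ i, (∑ j, d j * e j i) ^ 2 = ∑ j, d j * e j i * ∑ k, d k * e k i := by
    intro i; rw [sq, Finset.sum_mul]
  simp only [hexp]
  rw [Finset.sum_comm]
  apply Finset.sum_congr rfl
  intro j _
  have : ∀ i, d j * e j i * ∑ k, d k * e k i = d j * (e j i * ∑ k, d k * e k i) := by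
    intro i; ring
  simp only [this]
  rw [← Finset.mul_sum, inner_combo he d j, sq]

lemma key_exp (s y : ℝ) (hs : 1 ≤ s) (hy : 0 < y) :
    y ^ s * Real.exp (-(2 * y)) ≤ (s / (2 * Real.exp 1)) ^ s := by
  have hs0 : (0:ℝ) < s := lt_of_lt_of_le one_pos hs
  have h2e : (0:ℝ) < s / (2 * Real.exp 1) := by positivity
  rw [Real.rpow_def_of_pos hy, Real.rpow_def_of_pos h2e, ← Real.exp_add, Real.exp_le_exp]
  have hlog : Real.log (s / (2 * Real.exp 1)) = Real.log (s / 2) - 1 := by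
    rw [show s / (2 * Real.exp 1) = (s / 2) / Real.exp 1 by ring,
      Real.log_div (by positivity) (Real.exp_ne_zero 1), Real.log_exp]
  have h := Real.log_le_sub_one_of_pos (show 0 < y / (s / 2) by positivity)
  rw [Real.log_div hy.ne' (by positivity : (s / 2 : ℝ) ≠ 0)] at h
  have h2 := mul_le_mul_of_nonneg_left h hs0.le
  have h3 : s * (y / (s / 2)) = 2 * y := by field_simp
  rw [hlog]
  nlinarith [h2, h3]

lemma coeff_ineq (s t σ : ℝ) (hs : 1 ≤ s) (ht : 1 ≤ t) (hσ : 0 < σ) :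
    (Real.sqrt σ * Real.exp (-(t * σ))) ^ 2 ≤
      (s / (2 * Real.exp 1)) ^ s * t ^ (-s) * (σ ^ ((1 - s) / 2)) ^ 2 := by
  have ht0 : (0:ℝ) < t := lt_of_lt_of_le one_pos ht
  have hLHS : (Real.sqrt σ * Real.exp (-(t * σ))) ^ 2 = σ * Real.exp (-(2 * (t * σ))) := by
    rw [mul_pow, Real.sq_sqrt hσ.le, sq, ← Real.exp_add]
    ring_nf
  have hRHS : (σ ^ ((1 - s) / 2)) ^ 2 = σ ^ (1 - s) := by
    rw [← Real.rpow_natCast (σ ^ ((1 - s) / 2)) 2, ← Real.rpow_mul hσ.le]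
    norm_num
  rw [hLHS, hRHS]
  have hkey := key_exp s (t * σ) hs (by positivity)
  set E := Real.exp (-(2 * (t * σ))) with hE
  set C := (s / (2 * Real.exp 1)) ^ s with hC
  have htσ : (t * σ) ^ s = t ^ s * σ ^ s := Real.mul_rpow ht0.le hσ.le
  have hσs : σ ^ (1 - s) * σ ^ s = σ := by
    rw [← Real.rpow_add hσ]; norm_num
  have hts : t ^ (-s) * t ^ s = 1 := by
    rw [← Real.rpow_add ht0]; norm_num
  have heq : σ * E = σ ^ (1 - s) * t ^ (-s) * ((t * σ) ^ s * E) := by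
    rw [htσ]
    linear_combination (-(E * (t ^ (-s)) * t ^ s)) * hσs + (-(E * σ)) * hts
  rw [heq]
  have hmul := mul_le_mul_of_nonneg_left hkey
    (show (0:ℝ) ≤ σ ^ (1 - s) * t ^ (-s) by positivity)
  calc σ ^ (1 - s) * t ^ (-s) * ((t * σ) ^ s * E)
      ≤ σ ^ (1 - s) * t ^ (-s) * C := hmul
    _ = C * t ^ (-s) * σ ^ (1 - s) := by ring

/-- Let `Σ = ∑ σ_j e_j e_jᵀ` be symmetric positive definite with all
eigenvalues in `(0,1]`, let `s ≥ 1`, `t ≥ 1` and `β ∈ ℝ^p`. Then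
`‖Σ^{1/2}·exp(−tΣ)·β‖₂² ≤ (s/(2e))^s · t^{−s} · ‖Σ^{(1−s)/2}β‖₂²`, where the matrix
functions are defined by applying the corresponding functions to the eigenvalues. -/
theorem gradient_flow_bias_source_condition {p : ℕ}
    (e : Fin p → Fin p → ℝ) (σv : Fin p → ℝ) (s t : ℝ) (β : Fin p → ℝ)
    (he : ONFamily e) (hσpos : ∀ j, 0 < σv j) (hσle : ∀ j, σv j ≤ 1)
    (hs : 1 ≤ s) (ht : 1 ≤ t) :
    l2norm ((specMat e fun j => Real.sqrt (σv j)).mulVec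
        ((specMat e fun j => Real.exp (-(t * σv j))).mulVec β)) ^ 2 ≤
      (s / (2 * Real.exp 1)) ^ s * t ^ (-s) *
        l2norm ((specMat e fun j => σv j ^ ((1 - s) / 2)).mulVec β) ^ 2 := by
  set a : Fin p → ℝ := fun j => ∑ k, e j k * β k with ha
  have h2 : (specMat e fun j => Real.exp (-(t * σv j))).mulVec β =
      fun i => ∑ j, (Real.exp (-(t * σv j)) * a j) * e j i := by
    rw [mulVec_specMat]
  have h1 : (specMat e fun j => Real.sqrt (σv j)).mulVec
      ((specMat e fun j => Real.exp (-(t * σv j))).mulVec β) =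
      fun i => ∑ j, (Real.sqrt (σv j) * (Real.exp (-(t * σv j)) * a j)) * e j i := by
    rw [h2, mulVec_specMat]
    funext i
    apply Finset.sum_congr rfl
    intro j _
    rw [inner_combo he (fun l => Real.exp (-(t * σv l)) * a l) j]
  have h3 : (specMat e fun j => σv j ^ ((1 - s) / 2)).mulVec β =
      fun i => ∑ j, (σv j ^ ((1 - s) / 2) * a j) * e j i := by
    rw [mulVec_specMat]
  rw [h1, h3, l2norm_sq_combo he, l2norm_sq_combo he, Finset.mul_sum]
  apply Finset.sum_le_sum
  intro j _
  have hc := coeff_ineq s t (σv j) hs ht (hσpos j)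
  calc (Real.sqrt (σv j) * (Real.exp (-(t * σv j)) * a j)) ^ 2
      = (Real.sqrt (σv j) * Real.exp (-(t * σv j))) ^ 2 * a j ^ 2 := by ring
    _ ≤ (s / (2 * Real.exp 1)) ^ s * t ^ (-s) * (σv j ^ ((1 - s) / 2)) ^ 2 * a j ^ 2 :=
        mul_le_mul_of_nonneg_right hc (sq_nonneg _)
    _ = (s / (2 * Real.exp 1)) ^ s * t ^ (-s) * (σv j ^ ((1 - s) / 2) * a j) ^ 2 := by ring

end SpecFSD18
end
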